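/- arXiv:1801.02927 — 13 statements merged into one kernel-verified Lean document; each statement's English description precedes it below -/
import Mathlib

section
/- Let B have pullbacks and let P : X ⟶ B be a fibration all of whose fibres have pullbacks, stable under reindexing. Then every pullback square in a fibre P(I) is also a pullback square in the total category X. -/
open CategoryTheory CategoryTheory.Limits

namespace FibNotes

universe v₁ u₁ v₂ u₂

variable {𝒳 : Type u₁} [Category.{v₁} 𝒳] {𝒮 : Type u₂} [Category.{v₂} 𝒮]

/-- A morphism is *vertical* iff `P` maps it to an identity morphism. -/
def IsVerticalHom (P : 𝒳 ⥤ 𝒮) {a b : 𝒳} (α : a ⟶ b) : Prop :=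
  ∃ h : P.obj a = P.obj b, P.map α = eqToHom h

/-- `φ` is *cartesian* over `u := P φ` (strong / hypercartesian sense): every `θ`
lying over `v ≫ u` factors uniquely through `φ` via a morphism over `v`. -/
def IsCartesianHom (P : 𝒳 ⥤ 𝒮) {y x : 𝒳} (φ : y ⟶ x) : Prop :=
  ∀ (z : 𝒳) (θ : z ⟶ x) (v : P.obj z ⟶ P.obj y),
    P.map θ = v ≫ P.map φ → ∃! ψ : z ⟶ y, P.map ψ = v ∧ ψ ≫ φ = θ

/-- `φ` is *cocartesian* (dual universal property). -/
def IsCocartesianHom (P : 𝒳 ⥤ 𝒮) {x y : 𝒳} (φ : x ⟶ y) : Prop :=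
  ∀ (z : 𝒳) (ψ : x ⟶ z) (v : P.obj y ⟶ P.obj z),
    P.map ψ = P.map φ ≫ v → ∃! θ : y ⟶ z, P.map θ = v ∧ φ ≫ θ = ψ

/-- `P` is a fibration: cartesian liftings exist along every base morphism. -/
def IsFibration (P : 𝒳 ⥤ 𝒮) : Prop :=
  ∀ (x : 𝒳) (J : 𝒮) (u : J ⟶ P.obj x),
    ∃ (y : 𝒳) (φ : y ⟶ x) (h : P.obj y = J),
      IsCartesianHom P φ ∧ P.map φ = eqToHom h ≫ u


/-- The given commuting square of vertical morphisms is a pullback *in its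
fibre*: it has the universal property w.r.t. vertical cones. -/
def IsFibrePullback (P : 𝒳 ⥤ 𝒮) {z x₁ x₂ y : 𝒳}
    (α₁ : z ⟶ x₁) (α₂ : z ⟶ x₂) (β₁ : x₁ ⟶ y) (β₂ : x₂ ⟶ y) : Prop :=
  IsVerticalHom P α₁ ∧ IsVerticalHom P α₂ ∧ IsVerticalHom P β₁ ∧ IsVerticalHom P β₂ ∧
  α₁ ≫ β₁ = α₂ ≫ β₂ ∧
  ∀ (w : 𝒳) (γ₁ : w ⟶ x₁) (γ₂ : w ⟶ x₂),
    IsVerticalHom P γ₁ → IsVerticalHom P γ₂ → γ₁ ≫ β₁ = γ₂ ≫ β₂ →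
    ∃! γ : w ⟶ z, IsVerticalHom P γ ∧ γ ≫ α₁ = γ₁ ∧ γ ≫ α₂ = γ₂

/-- Every fibre has pullbacks. -/
def FibrePullbacksExist (P : 𝒳 ⥤ 𝒮) : Prop :=
  ∀ {x₁ x₂ y : 𝒳} (β₁ : x₁ ⟶ y) (β₂ : x₂ ⟶ y),
    IsVerticalHom P β₁ → IsVerticalHom P β₂ →
    ∃ (z : 𝒳) (α₁ : z ⟶ x₁) (α₂ : z ⟶ x₂), IsFibrePullback P α₁ α₂ β₁ β₂

/-- Fibre pullbacks are stable under reindexing: reindexing a fibre pullback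
square along cartesian arrows over a common base morphism again yields a
fibre pullback square. -/
def FibrePullbacksStable (P : 𝒳 ⥤ 𝒮) : Prop :=
  ∀ {z x₁ x₂ y z' x₁' x₂' y' : 𝒳}
    (α₁ : z ⟶ x₁) (α₂ : z ⟶ x₂) (β₁ : x₁ ⟶ y) (β₂ : x₂ ⟶ y)
    (α₁' : z' ⟶ x₁') (α₂' : z' ⟶ x₂') (β₁' : x₁' ⟶ y') (β₂' : x₂' ⟶ y')
    (θ : z' ⟶ z) (φ₁ : x₁' ⟶ x₁) (φ₂ : x₂' ⟶ x₂) (ψ : y' ⟶ y),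
    IsFibrePullback P α₁ α₂ β₁ β₂ →
    IsCartesianHom P θ → IsCartesianHom P φ₁ → IsCartesianHom P φ₂ →
    IsCartesianHom P ψ →
    IsVerticalHom P α₁' → IsVerticalHom P α₂' →
    IsVerticalHom P β₁' → IsVerticalHom P β₂' →
    α₁' ≫ φ₁ = θ ≫ α₁ → α₂' ≫ φ₂ = θ ≫ α₂ →
    β₁' ≫ ψ = φ₁ ≫ β₁ → β₂' ≫ ψ = φ₂ ≫ β₂ →
    IsFibrePullback P α₁' α₂' β₁' β₂'

/-- Cartesian morphisms are "monic over the base": two maps with the same image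
under `P` that become equal after composing with a cartesian `φ` are equal. -/
lemma cart_cancel {P : 𝒳 ⥤ 𝒮} {x' x w : 𝒳} {φ : x' ⟶ x}
    (hφ : IsCartesianHom P φ) {a b : w ⟶ x'}
    (hm : P.map a = P.map b) (hc : a ≫ φ = b ≫ φ) : a = b := by
  obtain ⟨ψ, -, hu⟩ := hφ w (a ≫ φ) (P.map a) (by simp)
  rw [hu a ⟨rfl, rfl⟩, hu b ⟨hm.symm, hc.symm⟩]

/-- For a fibration of categories with pullbacks (fibres have pullbacks,
stable under reindexing), every pullback in a fibre is a pullback in the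
total category. -/
theorem fibre_pullback_isPullback (P : 𝒳 ⥤ 𝒮) [HasPullbacks 𝒮]
    (hP : IsFibration P)
    (hex : FibrePullbacksExist P) (hst : FibrePullbacksStable P)
    {z x₁ x₂ y : 𝒳} (α₁ : z ⟶ x₁) (α₂ : z ⟶ x₂) (β₁ : x₁ ⟶ y) (β₂ : x₂ ⟶ y)
    (h : IsFibrePullback P α₁ α₂ β₁ β₂) :
    IsPullback α₁ α₂ β₁ β₂ := by
  obtain ⟨⟨ez1, hmα₁⟩, ⟨ez2, hmα₂⟩, ⟨e1y, hmβ₁⟩, ⟨e2y, hmβ₂⟩, hcomm, huniv⟩ := h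
  have key : ∀ (w : 𝒳) (γ₁ : w ⟶ x₁) (γ₂ : w ⟶ x₂), γ₁ ≫ β₁ = γ₂ ≫ β₂ →
      ∃! γ : w ⟶ z, γ ≫ α₁ = γ₁ ∧ γ ≫ α₂ = γ₂ := by
    intro w γ₁ γ₂ hγ
    have hbase : P.map γ₂ ≫ eqToHom e2y = P.map γ₁ ≫ eqToHom e1y := by
      have := congrArg P.map hγ
      simp only [P.map_comp, hmβ₁, hmβ₂] at this
      exact this.symm
    obtain ⟨z', θ, hz', hθc, hθm⟩ := hP z (P.obj w) (P.map γ₁ ≫ eqToHom ez1.symm)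
    obtain ⟨x₁', φ₁, hx₁', hφ₁c, hφ₁m⟩ := hP x₁ (P.obj w) (P.map γ₁)
    obtain ⟨x₂', φ₂, hx₂', hφ₂c, hφ₂m⟩ := hP x₂ (P.obj w) (P.map γ₂)
    obtain ⟨y', ψ, hy', hψc, hψm⟩ := hP y (P.obj w) (P.map γ₁ ≫ eqToHom e1y)
    -- vertical factorizations of the cone legs
    obtain ⟨γ₁v, ⟨hγ₁vm, hγ₁vf⟩, -⟩ := hφ₁c w γ₁ (eqToHom hx₁'.symm)
      (by rw [hφ₁m]; simp)
    obtain ⟨γ₂v, ⟨hγ₂vm, hγ₂vf⟩, -⟩ := hφ₂c w γ₂ (eqToHom hx₂'.symm)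
      (by rw [hφ₂m]; simp)
    -- the reindexed square
    obtain ⟨β₁', ⟨hβ₁'m, hβ₁'f⟩, -⟩ := hψc x₁' (φ₁ ≫ β₁)
      (eqToHom (hx₁'.trans hy'.symm))
      (by rw [P.map_comp, hφ₁m, hψm, hmβ₁]; simp)
    obtain ⟨β₂', ⟨hβ₂'m, hβ₂'f⟩, -⟩ := hψc x₂' (φ₂ ≫ β₂)
      (eqToHom (hx₂'.trans hy'.symm))
      (by rw [P.map_comp, hφ₂m, hψm, hmβ₂, Category.assoc, hbase]; simp)
    obtain ⟨α₁', ⟨hα₁'m, hα₁'f⟩, -⟩ := hφ₁c z' (θ ≫ α₁)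
      (eqToHom (hz'.trans hx₁'.symm))
      (by rw [P.map_comp, hθm, hφ₁m, hmα₁]; simp)
    obtain ⟨α₂', ⟨hα₂'m, hα₂'f⟩, -⟩ := hφ₂c z' (θ ≫ α₂)
      (eqToHom (hz'.trans hx₂'.symm))
      (by
        have hγ₂eq : P.map γ₂ = P.map γ₁ ≫ eqToHom e1y ≫ eqToHom e2y.symm := by
          rw [← Category.assoc, ← hbase]; simp
        rw [P.map_comp, hθm, hφ₂m, hmα₂, hγ₂eq]
        simp)
    have hpb' : IsFibrePullback P α₁' α₂' β₁' β₂' :=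
      hst α₁ α₂ β₁ β₂ α₁' α₂' β₁' β₂' θ φ₁ φ₂ ψ
        ⟨⟨ez1, hmα₁⟩, ⟨ez2, hmα₂⟩, ⟨e1y, hmβ₁⟩, ⟨e2y, hmβ₂⟩, hcomm, huniv⟩
        hθc hφ₁c hφ₂c hψc ⟨_, hα₁'m⟩ ⟨_, hα₂'m⟩ ⟨_, hβ₁'m⟩ ⟨_, hβ₂'m⟩
        hα₁'f hα₂'f hβ₁'f hβ₂'f
    obtain ⟨-, -, -, -, -, huniv'⟩ := hpb'
    have hcone : γ₁v ≫ β₁' = γ₂v ≫ β₂' := by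
      refine cart_cancel hψc ?_ ?_
      · rw [P.map_comp, P.map_comp, hγ₁vm, hγ₂vm, hβ₁'m, hβ₂'m]; simp
      · rw [Category.assoc, hβ₁'f, Category.assoc, hβ₂'f, ← Category.assoc,
          hγ₁vf, ← Category.assoc, hγ₂vf, hγ]
    obtain ⟨γv, ⟨-, hγv1, hγv2⟩, hγvu⟩ :=
      huniv' w γ₁v γ₂v ⟨_, hγ₁vm⟩ ⟨_, hγ₂vm⟩ hcone
    refine ⟨γv ≫ θ, ⟨?_, ?_⟩, ?_⟩
    · rw [Category.assoc, ← hα₁'f, ← Category.assoc, hγv1, hγ₁vf]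
    · rw [Category.assoc, ← hα₂'f, ← Category.assoc, hγv2, hγ₂vf]
    · rintro γ' ⟨h1, h2⟩
      have hPγ' : P.map γ' = P.map γ₁ ≫ eqToHom ez1.symm := by
        have := congrArg P.map h1
        rw [P.map_comp, hmα₁] at this
        rw [← this]; simp
      obtain ⟨γ'', ⟨hγ''m, hγ''f⟩, -⟩ := hθc w γ' (eqToHom hz'.symm)
        (by rw [hθm, hPγ']; simp)
      have e1 : γ'' ≫ α₁' = γ₁v := by
        refine cart_cancel hφ₁c ?_ ?_
        · rw [P.map_comp, hγ''m, hα₁'m, hγ₁vm]; simp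
        · rw [Category.assoc, hα₁'f, ← Category.assoc, hγ''f, h1, hγ₁vf]
      have e2 : γ'' ≫ α₂' = γ₂v := by
        refine cart_cancel hφ₂c ?_ ?_
        · rw [P.map_comp, hγ''m, hα₂'m, hγ₂vm]; simp
        · rw [Category.assoc, hα₂'f, ← Category.assoc, hγ''f, h2, hγ₂vf]
      rw [← hγ''f, hγvu γ'' ⟨⟨_, hγ''m⟩, e1, e2⟩]
  exact IsPullback.of_isLimit (PullbackCone.IsLimit.mk hcomm
    (fun s => (key s.pt s.fst s.snd s.condition).choose)
    (fun s => (key s.pt s.fst s.snd s.condition).choose_spec.1.1)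
    (fun s => (key s.pt s.fst s.snd s.condition).choose_spec.1.2)
    (fun s m hm₁ hm₂ =>
      (key s.pt s.fst s.snd s.condition).choose_spec.2 m ⟨hm₁, hm₂⟩))

end FibNotes
end

section
/- Let B be a category with pullbacks. A fibration P : X ⟶ B is a fibration of categories with pullbacks (all fibres have pullbacks preserved by reindexing) if and only if the total category X has pullbacks and P preserves them. -/
open CategoryTheory CategoryTheory.Limits

namespace FibNotes

universe v₁ u₁ v₂ u₂

variable {𝒳 : Type u₁} [Category.{v₁} 𝒳] {𝒮 : Type u₂} [Category.{v₂} 𝒮]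

lemma vert_comp (P : 𝒳 ⥤ 𝒮) {a b c : 𝒳} {f : a ⟶ b} {g : b ⟶ c}
    (hf : IsVerticalHom P f) (hg : IsVerticalHom P g) : IsVerticalHom P (f ≫ g) := by
  obtain ⟨h1, e1⟩ := hf; obtain ⟨h2, e2⟩ := hg
  exact ⟨h1.trans h2, by rw [P.map_comp, e1, e2, eqToHom_trans]⟩

lemma vert_map_eq (P : 𝒳 ⥤ 𝒮) {a b : 𝒳} {f g : a ⟶ b}
    (hf : IsVerticalHom P f) (hg : IsVerticalHom P g) : P.map f = P.map g := by
  obtain ⟨h1, e1⟩ := hf; obtain ⟨h2, e2⟩ := hg; rw [e1, e2]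

lemma cart_uniq (P : 𝒳 ⥤ 𝒮) {y x : 𝒳} {φ : y ⟶ x} (hφ : IsCartesianHom P φ) {z : 𝒳}
    {ψ ψ' : z ⟶ y} (h1 : P.map ψ = P.map ψ') (h2 : ψ ≫ φ = ψ' ≫ φ) : ψ = ψ' := by
  obtain ⟨u, -, hu⟩ := hφ z (ψ ≫ φ) (P.map ψ) (by rw [P.map_comp])
  exact (hu ψ ⟨rfl, rfl⟩).trans (hu ψ' ⟨h1.symm, h2.symm⟩).symm

lemma isPullback_of_eu {C : Type*} [Category C] {w x y z : C}
    {fst : w ⟶ x} {snd : w ⟶ y} {f : x ⟶ z} {g : y ⟶ z}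
    (comm : fst ≫ f = snd ≫ g)
    (H : ∀ (a : C) (c₁ : a ⟶ x) (c₂ : a ⟶ y), c₁ ≫ f = c₂ ≫ g →
      ∃! k : a ⟶ w, k ≫ fst = c₁ ∧ k ≫ snd = c₂) :
    IsPullback fst snd f g :=
  IsPullback.of_isLimit (PullbackCone.IsLimit.mk comm
    (fun s => (H s.pt s.fst s.snd s.condition).exists.choose)
    (fun s => (H s.pt s.fst s.snd s.condition).exists.choose_spec.1)
    (fun s => (H s.pt s.fst s.snd s.condition).exists.choose_spec.2)
    (fun s m h1 h2 =>
      (H s.pt s.fst s.snd s.condition).unique ⟨h1, h2⟩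
        (H s.pt s.fst s.snd s.condition).exists.choose_spec))

lemma forward_pb (P : 𝒳 ⥤ 𝒮) [HasPullbacks 𝒮] (hP : IsFibration P)
    (hE : FibrePullbacksExist P) (hS : FibrePullbacksStable P)
    {x y z : 𝒳} (f : x ⟶ z) (g : y ⟶ z) :
    ∃ (w : 𝒳) (fst : w ⟶ x) (snd : w ⟶ y),
      IsPullback fst snd f g ∧
      IsPullback (P.map fst) (P.map snd) (P.map f) (P.map g) := by
  set p₁ := pullback.fst (P.map f) (P.map g) with hp₁
  set p₂ := pullback.snd (P.map f) (P.map g) with hp₂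
  have hpc : p₁ ≫ P.map f = p₂ ≫ P.map g := pullback.condition
  obtain ⟨x', φ₁, hx, cφ₁, mφ₁⟩ := hP x _ p₁
  obtain ⟨y', φ₂, hy, cφ₂, mφ₂⟩ := hP y _ p₂
  obtain ⟨z', χ, hz, cχ, mχ⟩ := hP z _ (p₁ ≫ P.map f)
  obtain ⟨δ₁, ⟨mδ₁, eδ₁⟩, -⟩ := cχ x' (φ₁ ≫ f) (eqToHom (hx.trans hz.symm))
    (by rw [P.map_comp, mφ₁, mχ]; simp)
  obtain ⟨δ₂, ⟨mδ₂, eδ₂⟩, -⟩ := cχ y' (φ₂ ≫ g) (eqToHom (hy.trans hz.symm))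
    (by rw [P.map_comp, mφ₂, mχ, Category.assoc, ← hpc]; simp)
  obtain ⟨w, α₁, α₂, Hfp⟩ := hE δ₁ δ₂ ⟨_, mδ₁⟩ ⟨_, mδ₂⟩
  obtain ⟨e₁, me₁⟩ := Hfp.1
  obtain ⟨e₂, me₂⟩ := Hfp.2.1
  have hcomm := Hfp.2.2.2.2.1
  have hw : P.obj w = pullback (P.map f) (P.map g) := e₁.trans hx
  have Pfst : P.map (α₁ ≫ φ₁) = eqToHom hw ≫ p₁ := by
    rw [P.map_comp, me₁, mφ₁, eqToHom_trans_assoc]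
  have Psnd : P.map (α₂ ≫ φ₂) = eqToHom hw ≫ p₂ := by
    rw [P.map_comp, me₂, mφ₂, eqToHom_trans_assoc]
  have hcomm' : (α₁ ≫ φ₁) ≫ f = (α₂ ≫ φ₂) ≫ g := by
    rw [Category.assoc, Category.assoc, ← eδ₁, ← eδ₂, ← Category.assoc, ← Category.assoc,
      hcomm]
  have hB : IsPullback (P.map (α₁ ≫ φ₁)) (P.map (α₂ ≫ φ₂)) (P.map f) (P.map g) := by
    apply isPullback_of_eu
    · rw [Pfst, Psnd, Category.assoc, Category.assoc, hpc]
    · intro a c₁ c₂ hc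
      refine ⟨pullback.lift c₁ c₂ hc ≫ eqToHom hw.symm, ⟨?_, ?_⟩, ?_⟩
      · rw [Pfst, Category.assoc, eqToHom_trans_assoc, eqToHom_refl, Category.id_comp]
        exact pullback.lift_fst _ _ _
      · rw [Psnd, Category.assoc, eqToHom_trans_assoc, eqToHom_refl, Category.id_comp]
        exact pullback.lift_snd _ _ _
      · rintro m ⟨hm1, hm2⟩
        rw [Pfst, ← Category.assoc] at hm1
        rw [Psnd, ← Category.assoc] at hm2
        have : m ≫ eqToHom hw = pullback.lift c₁ c₂ hc := by
          apply pullback.hom_ext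
          · rw [Category.assoc, pullback.lift_fst]; exact (Category.assoc _ _ _).symm.trans hm1
          · rw [Category.assoc, pullback.lift_snd]; exact (Category.assoc _ _ _).symm.trans hm2
        rw [← this]; simp
  refine ⟨w, α₁ ≫ φ₁, α₂ ≫ φ₂, isPullback_of_eu hcomm' ?_, hB⟩
  intro a c₁ c₂ hc
  set t := pullback.lift (P.map c₁) (P.map c₂)
    (by rw [← P.map_comp, ← P.map_comp, hc]) with htdef
  have ht₁ : t ≫ p₁ = P.map c₁ := pullback.lift_fst _ _ _
  have ht₂ : t ≫ p₂ = P.map c₂ := pullback.lift_snd _ _ _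
  obtain ⟨ψ₁, ⟨mψ₁, eψ₁⟩, -⟩ := cφ₁ a c₁ (t ≫ eqToHom hx.symm)
    (by rw [mφ₁, Category.assoc, eqToHom_trans_assoc, eqToHom_refl, Category.id_comp, ht₁])
  obtain ⟨ψ₂, ⟨mψ₂, eψ₂⟩, -⟩ := cφ₂ a c₂ (t ≫ eqToHom hy.symm)
    (by rw [mφ₂, Category.assoc, eqToHom_trans_assoc, eqToHom_refl, Category.id_comp, ht₂])
  have σeq : ψ₁ ≫ δ₁ = ψ₂ ≫ δ₂ := by
    apply cart_uniq P cχ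
    · rw [P.map_comp, P.map_comp, mψ₁, mψ₂, mδ₁, mδ₂]; simp
    · simp only [Category.assoc, eδ₁, eδ₂]
      rw [← Category.assoc, eψ₁, ← Category.assoc, eψ₂, hc]
  obtain ⟨wt, Θ, hwt, cΘ, mΘ⟩ := hP w (P.obj a) (t ≫ eqToHom hw.symm)
  obtain ⟨xt, Φ₁, hxt, cΦ₁, mΦ₁⟩ := hP x' (P.obj a) (t ≫ eqToHom hx.symm)
  obtain ⟨yt, Φ₂, hyt, cΦ₂, mΦ₂⟩ := hP y' (P.obj a) (t ≫ eqToHom hy.symm)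
  obtain ⟨zt, Ψ, hzt, cΨ, mΨ⟩ := hP z' (P.obj a) (t ≫ eqToHom hz.symm)
  obtain ⟨at₁, ⟨mat₁, eat₁⟩, -⟩ := cΦ₁ wt (Θ ≫ α₁) (eqToHom (hwt.trans hxt.symm))
    (by rw [P.map_comp, mΘ, me₁, mΦ₁]; simp)
  obtain ⟨at₂, ⟨mat₂, eat₂⟩, -⟩ := cΦ₂ wt (Θ ≫ α₂) (eqToHom (hwt.trans hyt.symm))
    (by rw [P.map_comp, mΘ, me₂, mΦ₂]; simp)
  obtain ⟨bt₁, ⟨mbt₁, ebt₁⟩, -⟩ := cΨ xt (Φ₁ ≫ δ₁) (eqToHom (hxt.trans hzt.symm))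
    (by rw [P.map_comp, mΦ₁, mδ₁, mΨ]; simp)
  obtain ⟨bt₂, ⟨mbt₂, ebt₂⟩, -⟩ := cΨ yt (Φ₂ ≫ δ₂) (eqToHom (hyt.trans hzt.symm))
    (by rw [P.map_comp, mΦ₂, mδ₂, mΨ]; simp)
  have Ht := hS α₁ α₂ δ₁ δ₂ at₁ at₂ bt₁ bt₂ Θ Φ₁ Φ₂ Ψ Hfp cΘ cΦ₁ cΦ₂ cΨ
    ⟨_, mat₁⟩ ⟨_, mat₂⟩ ⟨_, mbt₁⟩ ⟨_, mbt₂⟩ eat₁ eat₂ ebt₁ ebt₂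
  obtain ⟨γ₁, ⟨mγ₁, eγ₁⟩, -⟩ := cΦ₁ a ψ₁ (eqToHom hxt.symm) (by rw [mψ₁, mΦ₁]; simp)
  obtain ⟨γ₂, ⟨mγ₂, eγ₂⟩, -⟩ := cΦ₂ a ψ₂ (eqToHom hyt.symm) (by rw [mψ₂, mΦ₂]; simp)
  have hγeq : γ₁ ≫ bt₁ = γ₂ ≫ bt₂ := by
    apply cart_uniq P cΨ
    · exact vert_map_eq P (vert_comp P ⟨_, mγ₁⟩ ⟨_, mbt₁⟩) (vert_comp P ⟨_, mγ₂⟩ ⟨_, mbt₂⟩)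
    · simp only [Category.assoc, ebt₁, ebt₂]
      rw [← Category.assoc, eγ₁, ← Category.assoc, eγ₂, σeq]
  obtain ⟨γ, ⟨vγ, hγ1, hγ2⟩, hγu⟩ := Ht.2.2.2.2.2 a γ₁ γ₂ ⟨_, mγ₁⟩ ⟨_, mγ₂⟩ hγeq
  refine ⟨γ ≫ Θ, ⟨?_, ?_⟩, ?_⟩
  · have eat₁' : at₁ ≫ Φ₁ ≫ φ₁ = Θ ≫ α₁ ≫ φ₁ := by
      rw [← Category.assoc, eat₁, Category.assoc]
    rw [Category.assoc, ← eat₁', ← Category.assoc, hγ1, ← Category.assoc, eγ₁, eψ₁]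
  · have eat₂' : at₂ ≫ Φ₂ ≫ φ₂ = Θ ≫ α₂ ≫ φ₂ := by
      rw [← Category.assoc, eat₂, Category.assoc]
    rw [Category.assoc, ← eat₂', ← Category.assoc, hγ2, ← Category.assoc, eγ₂, eψ₂]
  · rintro m ⟨hm1, hm2⟩
    have hPm : P.map m = t ≫ eqToHom hw.symm := by
      have h1 : (P.map m ≫ eqToHom hw) ≫ p₁ = P.map c₁ := by
        rw [Category.assoc, ← Pfst, ← P.map_comp, hm1]
      have h2 : (P.map m ≫ eqToHom hw) ≫ p₂ = P.map c₂ := by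
        rw [Category.assoc, ← Psnd, ← P.map_comp, hm2]
      have : P.map m ≫ eqToHom hw = t := by
        apply pullback.hom_ext
        · exact h1.trans ht₁.symm
        · exact h2.trans ht₂.symm
      rw [← this]; simp
    obtain ⟨lam, ⟨mlam, elam⟩, -⟩ := cΘ a m (eqToHom hwt.symm) (by rw [hPm, mΘ]; simp)
    have mα₁ψ : m ≫ α₁ = ψ₁ := by
      apply cart_uniq P cφ₁
      · rw [P.map_comp, hPm, me₁, mψ₁]; simp
      · rw [Category.assoc, hm1, eψ₁]
    have mα₂ψ : m ≫ α₂ = ψ₂ := by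
      apply cart_uniq P cφ₂
      · rw [P.map_comp, hPm, me₂, mψ₂]; simp
      · rw [Category.assoc, hm2, eψ₂]
    have lat₁ : lam ≫ at₁ = γ₁ := by
      apply cart_uniq P cΦ₁
      · exact vert_map_eq P (vert_comp P ⟨_, mlam⟩ ⟨_, mat₁⟩) ⟨_, mγ₁⟩
      · rw [Category.assoc, eat₁, ← Category.assoc, elam, mα₁ψ, eγ₁]
    have lat₂ : lam ≫ at₂ = γ₂ := by
      apply cart_uniq P cΦ₂
      · exact vert_map_eq P (vert_comp P ⟨_, mlam⟩ ⟨_, mat₂⟩) ⟨_, mγ₂⟩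
      · rw [Category.assoc, eat₂, ← Category.assoc, elam, mα₂ψ, eγ₂]
    rw [← elam, hγu lam ⟨⟨_, mlam⟩, lat₁, lat₂⟩]

lemma backward_core (P : 𝒳 ⥤ 𝒮) (hP : IsFibration P) [HasPullbacks 𝒳]
    (pres : ∀ {w x y z : 𝒳} (fst : w ⟶ x) (snd : w ⟶ y) (f : x ⟶ z) (g : y ⟶ z),
      IsPullback fst snd f g → IsPullback (P.map fst) (P.map snd) (P.map f) (P.map g))
    {x₁ x₂ y : 𝒳} (β₁ : x₁ ⟶ y) (β₂ : x₂ ⟶ y)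
    (vβ₁ : IsVerticalHom P β₁) (vβ₂ : IsVerticalHom P β₂) :
    ∃ (z₀ : 𝒳) (v₁ : z₀ ⟶ x₁) (v₂ : z₀ ⟶ x₂),
      IsFibrePullback P v₁ v₂ β₁ β₂ ∧ IsPullback v₁ v₂ β₁ β₂ := by
  obtain ⟨h₁, mβ₁⟩ := vβ₁
  obtain ⟨h₂, mβ₂⟩ := vβ₂
  set fst := pullback.fst β₁ β₂ with hfst
  set snd := pullback.snd β₁ β₂ with hsnd
  have hBpb := pres fst snd β₁ β₂ (IsPullback.of_hasPullback β₁ β₂)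
  set t : P.obj x₁ ⟶ P.obj (pullback β₁ β₂) :=
    hBpb.lift (𝟙 _) (eqToHom (h₁.trans h₂.symm)) (by rw [mβ₁, mβ₂]; simp) with htdef
  have ht₁ : t ≫ P.map fst = 𝟙 _ := hBpb.lift_fst _ _ _
  have ht₂ : t ≫ P.map snd = eqToHom (h₁.trans h₂.symm) := hBpb.lift_snd _ _ _
  have hfs : P.map fst ≫ eqToHom (h₁.trans h₂.symm) = P.map snd := by
    have hw0 := hBpb.w
    rw [mβ₁, mβ₂] at hw0
    rw [show eqToHom (h₁.trans h₂.symm) = eqToHom h₁ ≫ eqToHom h₂.symm from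
      (eqToHom_trans _ _).symm, ← Category.assoc, hw0, Category.assoc]
    simp
  have htinv : P.map fst ≫ t = 𝟙 _ := by
    apply hBpb.hom_ext
    · rw [Category.assoc, ht₁, Category.comp_id, Category.id_comp]
    · rw [Category.assoc, ht₂, Category.id_comp, hfs]
  obtain ⟨z₀, φ, h₀, cφ, mφ⟩ := hP (pullback β₁ β₂) (P.obj x₁) t
  obtain ⟨ψ, ⟨mψ, eψ⟩, -⟩ := cφ (pullback β₁ β₂) (𝟙 _) (P.map fst ≫ eqToHom h₀.symm)
    (by rw [P.map_id, mφ]; simp only [Category.assoc, eqToHom_trans_assoc, eqToHom_refl,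
        Category.id_comp]; exact htinv.symm)
  have φψ : φ ≫ ψ = 𝟙 z₀ := by
    apply cart_uniq P cφ
    · rw [P.map_comp, mφ, mψ, P.map_id, Category.assoc, ← Category.assoc t, ht₁]
      simp
    · rw [Category.assoc, eψ, Category.comp_id, Category.id_comp]
  have mv₁ : P.map (φ ≫ fst) = eqToHom h₀ := by
    rw [P.map_comp, mφ, Category.assoc, ht₁, Category.comp_id]
  have mv₂ : P.map (φ ≫ snd) = eqToHom (h₀.trans (h₁.trans h₂.symm)) := by
    rw [P.map_comp, mφ, Category.assoc, ht₂, eqToHom_trans]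
  have comm : (φ ≫ fst) ≫ β₁ = (φ ≫ snd) ≫ β₂ := by
    simp only [Category.assoc, hfst, hsnd, pullback.condition]
  refine ⟨z₀, φ ≫ fst, φ ≫ snd, ⟨⟨_, mv₁⟩, ⟨_, mv₂⟩, ⟨_, mβ₁⟩, ⟨_, mβ₂⟩, comm, ?_⟩,
    isPullback_of_eu comm ?_⟩
  · intro a γ₁ γ₂ vγ₁ vγ₂ hγ
    obtain ⟨g₁, mg₁⟩ := vγ₁
    refine ⟨pullback.lift γ₁ γ₂ hγ ≫ ψ, ⟨⟨g₁.trans h₀.symm, ?_⟩, ?_, ?_⟩, ?_⟩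
    · rw [P.map_comp, mψ, ← Category.assoc, ← P.map_comp]
      rw [show pullback.lift γ₁ γ₂ hγ ≫ fst = γ₁ from pullback.lift_fst _ _ _, mg₁,
        eqToHom_trans]
    · rw [Category.assoc, ← Category.assoc ψ φ, eψ, Category.id_comp]
      exact pullback.lift_fst _ _ _
    · rw [Category.assoc, ← Category.assoc ψ φ, eψ, Category.id_comp]
      exact pullback.lift_snd _ _ _
    · rintro γ' ⟨-, f1, f2⟩
      have hφ' : γ' ≫ φ = pullback.lift γ₁ γ₂ hγ := by
        apply pullback.hom_ext
        · rw [Category.assoc, pullback.lift_fst]; exact f1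
        · rw [Category.assoc, pullback.lift_snd]; exact f2
      rw [← hφ']
      rw [Category.assoc, φψ, Category.comp_id]
  · intro a c₁ c₂ hc
    refine ⟨pullback.lift c₁ c₂ hc ≫ ψ, ⟨?_, ?_⟩, ?_⟩
    · rw [Category.assoc, ← Category.assoc ψ φ, eψ, Category.id_comp]
      exact pullback.lift_fst _ _ _
    · rw [Category.assoc, ← Category.assoc ψ φ, eψ, Category.id_comp]
      exact pullback.lift_snd _ _ _
    · rintro m ⟨hm1, hm2⟩
      have hφ' : m ≫ φ = pullback.lift c₁ c₂ hc := by
        apply pullback.hom_ext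
        · rw [Category.assoc, pullback.lift_fst]; exact hm1
        · rw [Category.assoc, pullback.lift_snd]; exact hm2
      rw [← hφ', Category.assoc, φψ, Category.comp_id]

lemma fibrePB_isPullback (P : 𝒳 ⥤ 𝒮) (hP : IsFibration P) [HasPullbacks 𝒳]
    (pres : ∀ {w x y z : 𝒳} (fst : w ⟶ x) (snd : w ⟶ y) (f : x ⟶ z) (g : y ⟶ z),
      IsPullback fst snd f g → IsPullback (P.map fst) (P.map snd) (P.map f) (P.map g))
    {z x₁ x₂ y : 𝒳} {α₁ : z ⟶ x₁} {α₂ : z ⟶ x₂} {β₁ : x₁ ⟶ y} {β₂ : x₂ ⟶ y}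
    (Hfp : IsFibrePullback P α₁ α₂ β₁ β₂) : IsPullback α₁ α₂ β₁ β₂ := by
  obtain ⟨vα₁, vα₂, vβ₁, vβ₂, hcomm, HUP⟩ := Hfp
  obtain ⟨z₀, v₁, v₂, ⟨w₁, w₂, -, -, hcomm₀, HUP₀⟩, HcPB⟩ :=
    backward_core P hP pres β₁ β₂ vβ₁ vβ₂
  obtain ⟨ι, ⟨vι, hι1, hι2⟩, -⟩ := HUP z₀ v₁ v₂ w₁ w₂ hcomm₀
  obtain ⟨κ, ⟨vκ, hκ1, hκ2⟩, hκu⟩ := HUP₀ z α₁ α₂ vα₁ vα₂ hcomm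
  have κι : κ ≫ ι = 𝟙 z := by
    obtain ⟨γ, -, hγu⟩ := HUP z α₁ α₂ vα₁ vα₂ hcomm
    have h1 := hγu (κ ≫ ι) ⟨vert_comp P vκ vι, by rw [Category.assoc, hι1, hκ1],
      by rw [Category.assoc, hι2, hκ2]⟩
    have h2 := hγu (𝟙 z) ⟨⟨rfl, P.map_id z⟩, Category.id_comp _, Category.id_comp _⟩
    rw [h1, h2]
  apply isPullback_of_eu hcomm
  intro a c₁ c₂ hc
  refine ⟨HcPB.lift c₁ c₂ hc ≫ ι, ⟨?_, ?_⟩, ?_⟩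
  · rw [Category.assoc, hι1, IsPullback.lift_fst]
  · rw [Category.assoc, hι2, IsPullback.lift_snd]
  · rintro m ⟨hm1, hm2⟩
    have hmκ : m ≫ κ = HcPB.lift c₁ c₂ hc := by
      apply HcPB.hom_ext
      · rw [Category.assoc, hκ1, hm1, IsPullback.lift_fst]
      · rw [Category.assoc, hκ2, hm2, IsPullback.lift_snd]
    rw [← hmκ, Category.assoc, κι, Category.comp_id]

lemma backward_stable (P : 𝒳 ⥤ 𝒮) (hP : IsFibration P) [HasPullbacks 𝒳]
    (pres : ∀ {w x y z : 𝒳} (fst : w ⟶ x) (snd : w ⟶ y) (f : x ⟶ z) (g : y ⟶ z),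
      IsPullback fst snd f g → IsPullback (P.map fst) (P.map snd) (P.map f) (P.map g)) :
    FibrePullbacksStable P := by
  intro z x₁ x₂ y z' x₁' x₂' y' α₁ α₂ β₁ β₂ α₁' α₂' β₁' β₂' θ φ₁ φ₂ ψ Hfp
    cθ cφ₁ cφ₂ cψ vα₁' vα₂' vβ₁' vβ₂' sq₁ sq₂ sq₃ sq₄
  have HA := fibrePB_isPullback P hP pres Hfp
  obtain ⟨vα₁, vα₂, vβ₁, vβ₂, hcomm, HUP⟩ := Hfp
  have comm' : α₁' ≫ β₁' = α₂' ≫ β₂' := by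
    apply cart_uniq P cψ
    · exact vert_map_eq P (vert_comp P vα₁' vβ₁') (vert_comp P vα₂' vβ₂')
    · have L : (α₁' ≫ β₁') ≫ ψ = θ ≫ (α₂ ≫ β₂) := by
        rw [Category.assoc, sq₃, ← Category.assoc, sq₁, Category.assoc, hcomm]
      have R : (α₂' ≫ β₂') ≫ ψ = θ ≫ (α₂ ≫ β₂) := by
        rw [Category.assoc, sq₄, ← Category.assoc, sq₂, Category.assoc]
      rw [L, R]
  obtain ⟨ea₁, mα₁'⟩ := vα₁'
  obtain ⟨ea₂, mα₂'⟩ := vα₂'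
  obtain ⟨e₁, mα₁⟩ := vα₁
  obtain ⟨e₂, mα₂⟩ := vα₂
  refine ⟨⟨ea₁, mα₁'⟩, ⟨ea₂, mα₂'⟩, vβ₁', vβ₂', comm', ?_⟩
  intro w' γ₁' γ₂' vγ₁' vγ₂' hγ'
  obtain ⟨g₁, mγ₁'⟩ := vγ₁'
  obtain ⟨g₂, mγ₂'⟩ := vγ₂'
  have hcone : (γ₁' ≫ φ₁) ≫ β₁ = (γ₂' ≫ φ₂) ≫ β₂ := by
    rw [Category.assoc, ← sq₃, ← Category.assoc, hγ', Category.assoc, sq₄, ← Category.assoc]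
  have hγ₀1 := HA.lift_fst (γ₁' ≫ φ₁) (γ₂' ≫ φ₂) hcone
  have hγ₀2 := HA.lift_snd (γ₁' ≫ φ₁) (γ₂' ≫ φ₂) hcone
  set γ₀ := HA.lift (γ₁' ≫ φ₁) (γ₂' ≫ φ₂) hcone with hγ₀def
  have hPφ₁ : P.map φ₁ = eqToHom ea₁.symm ≫ P.map θ ≫ eqToHom e₁ := by
    have hs := congrArg P.map sq₁
    rw [P.map_comp, P.map_comp, mα₁', mα₁] at hs
    rw [← hs]; simp
  have hPγ₀ : P.map γ₀ = eqToHom (g₁.trans ea₁.symm) ≫ P.map θ := by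
    have h := congrArg P.map hγ₀1
    rw [P.map_comp, P.map_comp, mα₁, mγ₁', hPφ₁] at h
    rw [← cancel_mono (eqToHom e₁), h]
    simp
  obtain ⟨γ, ⟨mγ, eγθ⟩, -⟩ := cθ w' γ₀ (eqToHom (g₁.trans ea₁.symm)) hPγ₀
  have f1 : γ ≫ α₁' = γ₁' := by
    apply cart_uniq P cφ₁
    · exact vert_map_eq P (vert_comp P ⟨_, mγ⟩ ⟨_, mα₁'⟩) ⟨_, mγ₁'⟩
    · rw [Category.assoc, sq₁, ← Category.assoc, eγθ, hγ₀1]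
  have f2 : γ ≫ α₂' = γ₂' := by
    apply cart_uniq P cφ₂
    · exact vert_map_eq P (vert_comp P ⟨_, mγ⟩ ⟨_, mα₂'⟩) ⟨_, mγ₂'⟩
    · rw [Category.assoc, sq₂, ← Category.assoc, eγθ, hγ₀2]
  refine ⟨γ, ⟨⟨_, mγ⟩, f1, f2⟩, ?_⟩
  rintro γ'' ⟨vγ'', h1'', h2''⟩
  have e'' : γ'' ≫ θ = γ₀ := by
    apply HA.hom_ext
    · rw [Category.assoc, ← sq₁, ← Category.assoc, h1'', hγ₀1]
    · rw [Category.assoc, ← sq₂, ← Category.assoc, h2'', hγ₀2]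
  apply cart_uniq P cθ
  · exact vert_map_eq P vγ'' ⟨_, mγ⟩
  · rw [e'', eγθ]


/-- A fibration over a base with pullbacks is a fibration of categories with
pullbacks iff the total category has pullbacks and `P` preserves them. -/
theorem fibration_of_pullbacks_iff (P : 𝒳 ⥤ 𝒮) [HasPullbacks 𝒮]
    (hP : IsFibration P) :
    (FibrePullbacksExist P ∧ FibrePullbacksStable P) ↔
      (HasPullbacks 𝒳 ∧
        ∀ {w x y z : 𝒳} (fst : w ⟶ x) (snd : w ⟶ y) (f : x ⟶ z) (g : y ⟶ z),
          IsPullback fst snd f g →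
          IsPullback (P.map fst) (P.map snd) (P.map f) (P.map g)) := by
  constructor
  · rintro ⟨hE, hS⟩
    haveI : ∀ {X Y Z : 𝒳} {f : X ⟶ Z} {g : Y ⟶ Z}, HasLimit (cospan f g) := by
      intro X Y Z f g
      obtain ⟨w, F, S, h1, -⟩ := forward_pb P hP hE hS f g
      exact h1.hasPullback
    haveI hXpb : HasPullbacks 𝒳 := hasPullbacks_of_hasLimit_cospan 𝒳
    refine ⟨inferInstance, ?_⟩
    intro w x y z fst snd f g hpb
    obtain ⟨w', F, S, h1, h2⟩ := forward_pb P hP hE hS f g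
    set e := hpb.isoIsPullback _ _ h1 with hedef
    have hF : e.hom ≫ F = fst := hpb.isoIsPullback_hom_fst _ _ h1
    have hS' : e.hom ≫ S = snd := hpb.isoIsPullback_hom_snd _ _ h1
    apply isPullback_of_eu
    · rw [← P.map_comp, ← P.map_comp, hpb.w]
    · intro a c₁ c₂ hc
      have hinvF : e.inv ≫ fst = F := by rw [← hF, e.inv_hom_id_assoc]
      have hinvS : e.inv ≫ snd = S := by rw [← hS', e.inv_hom_id_assoc]
      refine ⟨h2.lift c₁ c₂ hc ≫ P.map e.inv, ⟨?_, ?_⟩, ?_⟩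
      · rw [Category.assoc, ← P.map_comp, hinvF, h2.lift_fst]
      · rw [Category.assoc, ← P.map_comp, hinvS, h2.lift_snd]
      · rintro m ⟨hm1, hm2⟩
        have hme : m ≫ P.map e.hom = h2.lift c₁ c₂ hc := by
          apply h2.hom_ext
          · rw [Category.assoc, ← P.map_comp, hF, hm1, h2.lift_fst]
          · rw [Category.assoc, ← P.map_comp, hS', hm2, h2.lift_snd]
        rw [← hme, Category.assoc, ← P.map_comp, e.hom_inv_id, P.map_id, Category.comp_id]
  · rintro ⟨hX, pres⟩
    haveI := hX
    constructor
    · intro x₁ x₂ y β₁ β₂ v1 v2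
      obtain ⟨z₀, w1, w2, Hc, -⟩ :=
        backward_core P hP (fun fst snd f g h => pres fst snd f g h) β₁ β₂ v1 v2
      exact ⟨z₀, w1, w2, Hc⟩
    · exact backward_stable P hP (fun fst snd f g h => pres fst snd f g h)

end FibNotes
end

section
/- In a fibration P : X ⟶ B, a commuting square of cartesian arrows over a pullback square in B is a pullback square in X. -/
open CategoryTheory CategoryTheory.Limits

namespace FibNotes

universe v₁ u₁ v₂ u₂

variable {𝒳 : Type u₁} [Category.{v₁} 𝒳] {𝒮 : Type u₂} [Category.{v₂} 𝒮]

/-- In a fibration, a commuting square of cartesian arrows over a pullback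
square in the base is a pullback square in the total category. -/
theorem cartesian_square_isPullback (P : 𝒳 ⥤ 𝒮) (hP : IsFibration P)
    {w x y z : 𝒳} (fst : w ⟶ x) (snd : w ⟶ y) (f : x ⟶ z) (g : y ⟶ z)
    (hcomm : fst ≫ f = snd ≫ g)
    (h₁ : IsCartesianHom P fst) (h₂ : IsCartesianHom P snd)
    (h₃ : IsCartesianHom P f) (h₄ : IsCartesianHom P g)
    (hpb : IsPullback (P.map fst) (P.map snd) (P.map f) (P.map g)) :
    IsPullback fst snd f g := by
  refine IsPullback.of_isLimit' ⟨hcomm⟩ (PullbackCone.IsLimit.mk hcomm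
    (fun s => ?_) (fun s => ?_) (fun s m hm1 hm2 => ?_)
    (lift := fun s => (h₁ s.pt s.fst (hpb.lift (P.map s.fst) (P.map s.snd)
      (by rw [← P.map_comp, ← P.map_comp, s.condition])) (by rw [hpb.lift_fst])).exists.choose)
    ) <;>
  · set l := hpb.lift (P.map s.fst) (P.map s.snd)
      (by rw [← P.map_comp, ← P.map_comp, s.condition]) with hl
    obtain ⟨hψP, hψ⟩ := (h₁ s.pt s.fst l (by rw [hpb.lift_fst])).exists.choose_spec
    set ψ := (h₁ s.pt s.fst l (by rw [hpb.lift_fst])).exists.choose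
    first
    | exact hψ
    | -- ψ ≫ snd = s.snd, via uniqueness for g
      · have h1 : P.map (ψ ≫ snd) = P.map s.snd ∧ (ψ ≫ snd) ≫ g = s.snd ≫ g := by
          constructor
          · rw [P.map_comp, hψP, hl, hpb.lift_snd]
          · rw [Category.assoc, ← hcomm, ← Category.assoc, hψ, s.condition]
        have h2 : P.map s.snd = P.map s.snd ∧ s.snd ≫ g = s.snd ≫ g := ⟨rfl, rfl⟩
        have := h₄ s.pt (s.snd ≫ g) (P.map s.snd) (by rw [P.map_comp])
        exact this.unique ⟨h1.1, h1.2⟩ ⟨h2.1, h2.2⟩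
    | -- uniqueness
      · have hmP : P.map m = l := by
          apply hpb.hom_ext
          · rw [← P.map_comp, hm1, hl, hpb.lift_fst]
          · rw [← P.map_comp, hm2, hl, hpb.lift_snd]
        exact (h₁ s.pt s.fst l (by rw [hpb.lift_fst])).unique ⟨hmP, hm1⟩ ⟨hψP, hψ⟩

end FibNotes
end

section
/- Let B have binary products and let P : X ⟶ B be a locally small fibration. Then for all objects X, Y in the total category X there exist φ₀ : Z₀ ⟶ X cartesian and f₀ : Z₀ ⟶ Y such that for every span φ : Z ⟶ X cartesian, f : Z ⟶ Y with P(φ) = P(f), there is a unique θ : Z ⟶ Z₀ with φ₀ ∘ θ = φ and f₀ ∘ θ = f. -/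
open CategoryTheory CategoryTheory.Limits

namespace FibNotes

universe v₁ u₁ v₂ u₂

variable {𝒳 : Type u₁} [Category.{v₁} 𝒳] {𝒮 : Type u₂} [Category.{v₂} 𝒮]

/-- The fibration `P` is locally small: for any two objects in the same fibre,
the category of spans (cartesian arrow to the first, arbitrary arrow to the
second, over the same base arrow) has a terminal object. -/
def LocallySmallFib (P : 𝒳 ⥤ 𝒮) : Prop :=
  ∀ (x y : 𝒳) (h : P.obj x = P.obj y),
    ∃ (u : 𝒳) (φ : u ⟶ x) (f : u ⟶ y),
      IsCartesianHom P φ ∧ P.map f = P.map φ ≫ eqToHom h ∧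
      ∀ (v : 𝒳) (ψ : v ⟶ x) (g : v ⟶ y),
        IsCartesianHom P ψ → P.map g = P.map ψ ≫ eqToHom h →
        ∃! θ : v ⟶ u, θ ≫ φ = ψ ∧ θ ≫ f = g

lemma isCartesianHom_comp {P : 𝒳 ⥤ 𝒮} {z y x : 𝒳} {φ : z ⟶ y} {ψ : y ⟶ x}
    (hφ : IsCartesianHom P φ) (hψ : IsCartesianHom P ψ) :
    IsCartesianHom P (φ ≫ ψ) := by
  intro w θ v hθ
  obtain ⟨α, ⟨hα1, hα2⟩, hαu⟩ := hψ w θ (v ≫ P.map φ) (by simpa using hθ)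
  obtain ⟨β, ⟨hβ1, hβ2⟩, hβu⟩ := hφ w α v hα1
  refine ⟨β, ⟨hβ1, by rw [← Category.assoc, hβ2, hα2]⟩, ?_⟩
  intro γ ⟨hγ1, hγ2⟩
  exact hβu γ ⟨hγ1, hαu (γ ≫ φ) ⟨by rw [P.map_comp, hγ1],
    by simpa using hγ2⟩ ▸ rfl⟩

lemma isCartesianHom_of_comp {P : 𝒳 ⥤ 𝒮} {u y x : 𝒳} {ψ : u ⟶ y} {χ : y ⟶ x}
    (hcomp : IsCartesianHom P (ψ ≫ χ)) (hχ : IsCartesianHom P χ) :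
    IsCartesianHom P ψ := by
  intro z θ w hθ
  obtain ⟨α, ⟨hα1, hα2⟩, hαu⟩ := hcomp z (θ ≫ χ) w
    (by rw [P.map_comp, hθ, P.map_comp, Category.assoc])
  have hαψ : α ≫ ψ = θ := by
    obtain ⟨β, hβ, hβu⟩ := hχ z (θ ≫ χ) (P.map θ) (by rw [P.map_comp])
    have h1 := hβu (α ≫ ψ) ⟨by rw [P.map_comp, hα1, hθ], by simpa using hα2⟩
    have h2 := hβu θ ⟨rfl, rfl⟩
    rw [h1, h2]
  refine ⟨α, ⟨hα1, hαψ⟩, ?_⟩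
  intro γ ⟨hγ1, hγ2⟩
  exact hαu γ ⟨hγ1, by rw [← Category.assoc, hγ2]⟩

/-- If the base has binary products and `P` is a locally small fibration, then
for all objects `x`, `y` there is a terminal span `(φ₀ cartesian, f₀)` from a
common vertex to `x` and `y`. -/
theorem locallySmall_terminal_span (P : 𝒳 ⥤ 𝒮) [HasBinaryProducts 𝒮]
    (hP : IsFibration P) (hls : LocallySmallFib P) (x y : 𝒳) :
    ∃ (z₀ : 𝒳) (φ₀ : z₀ ⟶ x) (f₀ : z₀ ⟶ y), IsCartesianHom P φ₀ ∧
      ∀ (z : 𝒳) (φ : z ⟶ x) (f : z ⟶ y),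
        IsCartesianHom P φ → HEq (P.map φ) (P.map f) →
        ∃! θ : z ⟶ z₀, θ ≫ φ₀ = φ ∧ θ ≫ f₀ = f := by
  classical
  obtain ⟨x', χx, hx, cχx, hχx⟩ := hP x (P.obj x ⨯ P.obj y) prod.fst
  obtain ⟨y', χy, hy, cχy, hχy⟩ := hP y (P.obj x ⨯ P.obj y) prod.snd
  have h : P.obj x' = P.obj y' := hx.trans hy.symm
  obtain ⟨u, φ'', f'', cφ'', hf'', huniv⟩ := hls x' y' h
  refine ⟨u, φ'' ≫ χx, f'' ≫ χy, isCartesianHom_comp cφ'' cχx, ?_⟩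
  intro z φ f hcart _
  set v : P.obj z ⟶ P.obj x ⨯ P.obj y := prod.lift (P.map φ) (P.map f) with hv
  obtain ⟨ψ, ⟨hψ1, hψ2⟩, hψu⟩ := cχx z φ (v ≫ eqToHom hx.symm)
    (by rw [hχx]; simp [hv]; exact (prod.lift_fst _ _).symm)
  obtain ⟨g, ⟨hg1, hg2⟩, hgu⟩ := cχy z f (v ≫ eqToHom hy.symm)
    (by rw [hχy]; simp [hv]; exact (prod.lift_snd _ _).symm)
  have hψcart : IsCartesianHom P ψ := isCartesianHom_of_comp (hψ2 ▸ hcart) cχx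
  have hgψ : P.map g = P.map ψ ≫ eqToHom h := by
    rw [hg1, hψ1, Category.assoc, eqToHom_trans]
  obtain ⟨θ, ⟨hθ1, hθ2⟩, hθu⟩ := huniv z ψ g hψcart hgψ
  refine ⟨θ, ⟨by rw [← Category.assoc, hθ1, hψ2], by rw [← Category.assoc, hθ2, hg2]⟩, ?_⟩
  intro θ' ⟨hθ'1, hθ'2⟩
  -- show `P.map θ' ≫ P.map φ'' = v ≫ eqToHom hx.symm`
  have key : P.map θ' ≫ P.map φ'' ≫ eqToHom hx = v := by
    apply Limits.prod.hom_ext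
    · rw [Category.assoc, Category.assoc, ← hχx, ← P.map_comp, ← P.map_comp, hθ'1]
      simp [hv]
      exact (prod.lift_fst _ _).symm
    · have e : eqToHom hx ≫ (prod.snd : (P.obj x ⨯ P.obj y) ⟶ P.obj y)
          = eqToHom h ≫ P.map χy := by
        rw [hχy, ← Category.assoc, eqToHom_trans]
      rw [Category.assoc, Category.assoc, e, ← Category.assoc (P.map φ''), ← hf'',
        ← P.map_comp, ← P.map_comp, hθ'2]
      simp [hv]
      exact (prod.lift_snd _ _).symm
  have keyx : P.map (θ' ≫ φ'') = v ≫ eqToHom hx.symm := by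
    rw [P.map_comp, ← key]; simp
  have keyy : P.map (θ' ≫ f'') = v ≫ eqToHom hy.symm := by
    rw [P.map_comp, hf'', ← Category.assoc, ← P.map_comp, keyx, Category.assoc,
      eqToHom_trans]
  have e1 : θ' ≫ φ'' = ψ := by
    have := hψu (θ' ≫ φ'') ⟨keyx, by rw [Category.assoc, hθ'1]⟩
    exact this
  have e2 : θ' ≫ f'' = g := by
    exact hgu (θ' ≫ f'') ⟨keyy, by rw [Category.assoc, hθ'2]⟩
  exact hθu θ' ⟨e1, e2⟩

end FibNotes
end

section
/- If B has an initial object 0 and P : X ⟶ B is a locally small fibration, then for any two objects X, Y in the fibre P(0) there is exactly one vertical morphism from X to Y. -/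
open CategoryTheory CategoryTheory.Limits

namespace FibNotes

universe v₁ u₁ v₂ u₂

variable {𝒳 : Type u₁} [Category.{v₁} 𝒳] {𝒮 : Type u₂} [Category.{v₂} 𝒮]

/-- Over an initial object of the base, a locally small fibration has exactly
one vertical morphism between any two objects of the fibre. -/
theorem unique_vertical_over_initial (P : 𝒳 ⥤ 𝒮) [HasInitial 𝒮]
    (hP : IsFibration P) (hls : LocallySmallFib P)
    {x y : 𝒳} (hx : P.obj x = ⊥_ 𝒮) (hy : P.obj y = ⊥_ 𝒮) :
    ∃! α : x ⟶ y, IsVerticalHom P α := by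
  have hxy : P.obj x = P.obj y := hx.trans hy.symm
  -- arrows out of `P.obj x` are unique, since it equals the initial object
  have hext : ∀ {Z : 𝒮} (f g : P.obj x ⟶ Z), f = g := by
    intro Z f g
    have h0 := Limits.initial.hom_ext (eqToHom hx.symm ≫ f) (eqToHom hx.symm ≫ g)
    calc f = eqToHom hx ≫ (eqToHom hx.symm ≫ f) := by simp
      _ = eqToHom hx ≫ (eqToHom hx.symm ≫ g) := by rw [h0]
      _ = g := by simp
  obtain ⟨u, φ, f, hφ, hf, huniv⟩ := hls x y hxy
  -- the identity is cartesian
  have hid : IsCartesianHom P (𝟙 x) := by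
    intro z θ v hθ
    refine ⟨θ, ⟨by simpa using hθ, by simp⟩, ?_⟩
    rintro ψ ⟨h1, h2⟩
    simpa using h2
  -- lift the identity through the cartesian arrow φ
  have hv : P.map (𝟙 x) = (eqToHom hx ≫ Limits.initial.to (P.obj u)) ≫ P.map φ :=
    hext _ _
  obtain ⟨ψ, ⟨hψP, hψφ⟩, hψuniq⟩ :=
    hφ x (𝟙 x) (eqToHom hx ≫ Limits.initial.to (P.obj u)) hv
  refine ⟨ψ ≫ f, ⟨hxy, ?_⟩, ?_⟩
  · have : P.map ψ ≫ P.map φ = 𝟙 (P.obj x) := by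
      rw [← P.map_comp, hψφ, P.map_id]
    rw [P.map_comp, hf, ← Category.assoc, this, Category.id_comp]
  · intro β hβ
    obtain ⟨hβeq, hβmap⟩ := hβ
    have hβ' : P.map β = P.map (𝟙 x) ≫ eqToHom hxy := by
      rw [P.map_id, Category.id_comp, hβmap]
    obtain ⟨θ, ⟨hθφ, hθf⟩, _⟩ := huniv x (𝟙 x) β hid hβ'
    -- θ and ψ are both liftings of 𝟙 x through φ over the same base arrow
    have hbase : P.map θ = P.map ψ := hext _ _
    have hPψ : P.map (𝟙 x) = P.map ψ ≫ P.map φ := by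
      rw [← P.map_comp, hψφ]
    obtain ⟨χ, _, hχuniq⟩ := hφ x (𝟙 x) (P.map ψ) hPψ
    have h1 : θ = χ := hχuniq θ ⟨hbase, hθφ⟩
    have h2 : ψ = χ := hχuniq ψ ⟨rfl, hψφ⟩
    rw [← hθf, h1, ← h2]

end FibNotes
end

section
/- If P : X ⟶ B is a locally small fibration, then every cartesian arrow of X lying over an epimorphism in B is itself an epimorphism in X. -/
open CategoryTheory CategoryTheory.Limits

namespace FibNotes

universe v₁ u₁ v₂ u₂

variable {𝒳 : Type u₁} [Category.{v₁} 𝒳] {𝒮 : Type u₂} [Category.{v₂} 𝒮]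

/-- In a locally small fibration, every cartesian arrow over an epimorphism in
the base is an epimorphism in the total category. -/
theorem cartesian_over_epi_is_epi (P : 𝒳 ⥤ 𝒮)
    (hP : IsFibration P) (hls : LocallySmallFib P)
    {y x : 𝒳} (φ : y ⟶ x) (hφ : IsCartesianHom P φ)
    (he : Epi (P.map φ)) : Epi φ := by
  constructor
  intro z f g hfg
  -- In the base, P f = P g.
  have hbase : P.map f = P.map g := by
    have : P.map φ ≫ P.map f = P.map φ ≫ P.map g := by
      rw [← P.map_comp, ← P.map_comp, hfg]
    exact (cancel_epi (P.map φ)).mp this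
  -- Pull back z along P f to the fibre of x.
  obtain ⟨z', ψz, h, hψz, hψzmap⟩ := hP z (P.obj x) (P.map f)
  -- Factor f through ψz.
  obtain ⟨f', ⟨hf'map, hf'⟩, hf'uniq⟩ := hψz x f (eqToHom h.symm) (by
    rw [hψzmap]; simp)
  -- Factor g through ψz.
  obtain ⟨g', ⟨hg'map, hg'⟩, hg'uniq⟩ := hψz x g (eqToHom h.symm) (by
    rw [hψzmap, ← hbase]; simp)
  -- φ ≫ f' = φ ≫ g' by uniqueness of factorization through ψz.
  obtain ⟨w, hw, hwuniq⟩ := hψz y (φ ≫ f) (P.map φ ≫ eqToHom h.symm) (by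
    rw [P.map_comp, hψzmap]; simp)
  have key : φ ≫ f' = φ ≫ g' := by
    have h1 : φ ≫ f' = w := hwuniq (φ ≫ f') ⟨by rw [P.map_comp, hf'map], by
      rw [Category.assoc, hf']⟩
    have h2 : φ ≫ g' = w := hwuniq (φ ≫ g') ⟨by rw [P.map_comp, hg'map], by
      rw [Category.assoc, hg', ← hfg]⟩
    rw [h1, h2]
  -- identity is cartesian
  have hid : IsCartesianHom P (𝟙 x) := by
    intro a θ v hv
    refine ⟨θ, ⟨by simpa using hv, by simp⟩, ?_⟩
    rintro c ⟨-, hc⟩; simpa using hc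
  -- Local smallness applied to x, z'.
  obtain ⟨u₀, φ₀, f₀, hφ₀, hf₀, hterm⟩ := hls x z' h.symm
  obtain ⟨θf, ⟨hθf1, hθf2⟩, -⟩ := hterm x (𝟙 x) f' hid (by simp [hf'map])
  obtain ⟨θg, ⟨hθg1, hθg2⟩, -⟩ := hterm x (𝟙 x) g' hid (by simp [hg'map])
  -- φ ≫ θf = φ ≫ θg by uniqueness of the terminal span factorization.
  obtain ⟨t, ht, htuniq⟩ := hterm y φ (φ ≫ f') hφ (by
    rw [P.map_comp, hf'map])
  have hcomp : φ ≫ θf = φ ≫ θg := by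
    have h1 : φ ≫ θf = t := htuniq (φ ≫ θf) ⟨by rw [Category.assoc, hθf1, Category.comp_id],
      by rw [Category.assoc, hθf2]⟩
    have h2 : φ ≫ θg = t := htuniq (φ ≫ θg) ⟨by rw [Category.assoc, hθg1, Category.comp_id],
      by rw [Category.assoc, hθg2, key]⟩
    rw [h1, h2]
  -- hence P θf = P θg, and θf = θg by cartesianness of φ₀.
  have hmapθ : P.map θf = P.map θg := by
    have : P.map φ ≫ P.map θf = P.map φ ≫ P.map θg := by
      rw [← P.map_comp, ← P.map_comp, hcomp]
    exact (cancel_epi (P.map φ)).mp this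
  obtain ⟨s, hs, hsuniq⟩ := hφ₀ x (𝟙 x) (P.map θf) (by
    rw [← P.map_comp, hθf1, P.map_id])
  have hθfg : θf = θg := by
    have h1 : θf = s := hsuniq θf ⟨rfl, hθf1⟩
    have h2 : θg = s := hsuniq θg ⟨hmapθ.symm, hθg1⟩
    rw [h1, h2]
  have : f' = g' := by rw [← hθf2, ← hθg2, hθfg]
  rw [← hf', ← hg', this]

end FibNotes
end

section
/- Let B have binary products and P : X ⟶ B be a locally small fibration. Then G ∈ P(I) is a generating family for P if and only if for every object X of X there exist a cartesian arrow φ_X : Z_X ⟶ G and a collectively epic arrow ψ_X : Z_X ⟶ X. -/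
open CategoryTheory CategoryTheory.Limits

namespace FibNotes

universe v₁ u₁ v₂ u₂

variable {𝒳 : Type u₁} [Category.{v₁} 𝒳] {𝒮 : Type u₂} [Category.{v₂} 𝒮]

/-- `ψ` is collectively epic: parallel vertical arrows agreeing after
precomposition with `ψ` are equal. -/
def CollectivelyEpic (P : 𝒳 ⥤ 𝒮) {z x : 𝒳} (ψ : z ⟶ x) : Prop :=
  ∀ (y : 𝒳) (α₁ α₂ : x ⟶ y), IsVerticalHom P α₁ → IsVerticalHom P α₂ →
    ψ ≫ α₁ = ψ ≫ α₂ → α₁ = α₂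

/-- `g` is a generating family for `P`: distinct parallel vertical arrows can
be separated by maps whose first leg is cartesian into `g`. -/
def IsGeneratingFamily (P : 𝒳 ⥤ 𝒮) (g : 𝒳) : Prop :=
  ∀ (x y : 𝒳) (α₁ α₂ : x ⟶ y), IsVerticalHom P α₁ → IsVerticalHom P α₂ →
    α₁ ≠ α₂ →
    ∃ (z : 𝒳) (φ : z ⟶ g) (ψ : z ⟶ x),
      IsCartesianHom P φ ∧ ψ ≫ α₁ ≠ ψ ≫ α₂

theorem cart_comp {P : 𝒳 ⥤ 𝒮} {a b c : 𝒳} {φ : a ⟶ b} {φ' : b ⟶ c}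
    (h1 : IsCartesianHom P φ) (h2 : IsCartesianHom P φ') :
    IsCartesianHom P (φ ≫ φ') := by
  intro z θ v hv
  rw [P.map_comp] at hv
  obtain ⟨χ, ⟨hχv, hχ⟩, hχu⟩ := h2 z θ (v ≫ P.map φ)
    (by rw [hv, Category.assoc])
  obtain ⟨ψ, ⟨hψv, hψ⟩, hψu⟩ := h1 z χ v hχv
  refine ⟨ψ, ⟨hψv, by rw [← Category.assoc, hψ, hχ]⟩, ?_⟩
  intro ψ' ⟨hψ'v, hψ'⟩
  have hφ : ψ' ≫ φ = χ := by
    refine hχu (ψ' ≫ φ) ⟨by rw [P.map_comp, hψ'v], by rw [Category.assoc, hψ']⟩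
  exact hψu ψ' ⟨hψ'v, hφ⟩

theorem cart_cancel_s13 {P : 𝒳 ⥤ 𝒮} {a b c : 𝒳} {ψ : a ⟶ b} {φ : b ⟶ c}
    (h1 : IsCartesianHom P (ψ ≫ φ)) (h2 : IsCartesianHom P φ) :
    IsCartesianHom P ψ := by
  intro z θ v hv
  obtain ⟨χ, ⟨hχv, hχ⟩, hχu⟩ := h1 z (θ ≫ φ) v
    (by rw [P.map_comp, P.map_comp, hv, Category.assoc])
  refine ⟨χ, ⟨hχv, ?_⟩, ?_⟩
  · obtain ⟨δ, ⟨hδv, hδ⟩, hδu⟩ := h2 z (θ ≫ φ) (v ≫ P.map ψ)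
      (by rw [P.map_comp, hv, Category.assoc])
    have e1 : χ ≫ ψ = δ := hδu (χ ≫ ψ)
      ⟨by rw [P.map_comp, hχv], by rw [Category.assoc]; exact hχ⟩
    have e2 : θ = δ := hδu θ ⟨hv, rfl⟩
    rw [e1, ← e2]
  · intro χ' ⟨hχ'v, hχ'⟩
    exact hχu χ' ⟨hχ'v, by rw [← Category.assoc, hχ']⟩

/-- For a locally small fibration over a base with binary products, `g` is a
generating family iff every object is reached by a collectively epic arrow
from the vertex of a cartesian arrow into `g`. -/
theorem generatingFamily_iff_collectivelyEpic_cover (P : 𝒳 ⥤ 𝒮)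
    [HasBinaryProducts 𝒮] (hP : IsFibration P) (hls : LocallySmallFib P)
    (g : 𝒳) :
    IsGeneratingFamily P g ↔
      ∀ x : 𝒳, ∃ (z : 𝒳) (φ : z ⟶ g) (ψ : z ⟶ x),
        IsCartesianHom P φ ∧ CollectivelyEpic P ψ := by
  constructor
  · intro hgen x
    obtain ⟨xb, πx, hx, cx, hπx⟩ := hP x (P.obj x ⨯ P.obj g) prod.fst
    obtain ⟨gb, πg, hg, cg, hπg⟩ := hP g (P.obj x ⨯ P.obj g) prod.snd
    have h : P.obj gb = P.obj xb := hg.trans hx.symm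
    obtain ⟨u, φ₀, f, cφ₀, hf, huniv⟩ := hls gb xb h
    refine ⟨u, φ₀ ≫ πg, f ≫ πx, cart_comp cφ₀ cg, ?_⟩
    intro y α₁ α₂ hv1 hv2 heq
    by_contra hne
    obtain ⟨z, χ, τ, cχ, hτ⟩ := hgen x y α₁ α₂ hv1 hv2 hne
    set w : P.obj z ⟶ P.obj x ⨯ P.obj g := prod.lift (P.map τ) (P.map χ) with hw
    obtain ⟨χ', ⟨hχ'v, hχ'⟩, _⟩ := cg z χ (w ≫ eqToHom hg.symm)
      (by rw [hπg, Category.assoc, ← Category.assoc (eqToHom hg.symm),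
              eqToHom_trans, eqToHom_refl, Category.id_comp, hw, prod.lift_snd])
    obtain ⟨τ', ⟨hτ'v, hτ'⟩, _⟩ := cx z τ (w ≫ eqToHom hx.symm)
      (by rw [hπx, Category.assoc, ← Category.assoc (eqToHom hx.symm),
              eqToHom_trans, eqToHom_refl, Category.id_comp, hw, prod.lift_fst])
    have cχ' : IsCartesianHom P χ' := cart_cancel_s13 (by rwa [hχ']) cg
    have hvv : P.map τ' = P.map χ' ≫ eqToHom h := by
      rw [hτ'v, hχ'v, Category.assoc, eqToHom_trans]
    obtain ⟨θ, ⟨hθ1, hθ2⟩, _⟩ := huniv z χ' τ' cχ' hvv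
    apply hτ
    have hτθ : τ = θ ≫ (f ≫ πx) := by rw [← Category.assoc, hθ2, hτ']
    have heq' : f ≫ πx ≫ α₁ = f ≫ πx ≫ α₂ := by simpa using heq
    rw [hτθ]; simp only [Category.assoc, heq']
  · intro hcov x y α₁ α₂ hv1 hv2 hne
    obtain ⟨z, φ, ψ, cφ, ce⟩ := hcov x
    exact ⟨z, φ, ψ, cφ, fun he => hne (ce y α₁ α₂ hv1 hv2 he)⟩

end FibNotes
end

section
/- Let B be a topos and P : X ⟶ B a fibration. If C is a definable class of objects of X, then for every cartesian arrow φ : Y ⟶ X lying over an epimorphism in B, X belongs to C if and only if Y belongs to C. -/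
open CategoryTheory CategoryTheory.Limits

namespace FibNotes

universe v₁ u₁ v₂ u₂

variable {𝒳 : Type u₁} [Category.{v₁} 𝒳] {𝒮 : Type u₂} [Category.{v₂} 𝒮]

/-- Prop-valued subobject classifier. -/
def HasSubobjectClassifier (𝒮 : Type u₂) [Category.{v₂} 𝒮] [HasTerminal 𝒮] : Prop :=
  ∃ (Ω : 𝒮) (t : ⊤_ 𝒮 ⟶ Ω),
    ∀ {a x : 𝒮} (m : a ⟶ x), Mono m →
      ∃! χ : x ⟶ Ω, IsPullback m (terminal.from a) χ t

/-- Prop-valued cartesian closedness. -/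
def PropCartesianClosed (𝒮 : Type u₂) [Category.{v₂} 𝒮] [HasBinaryProducts 𝒮] : Prop :=
  ∀ x y : 𝒮, ∃ (e : 𝒮) (ev : e ⨯ x ⟶ y),
    ∀ (z : 𝒮) (f : z ⨯ x ⟶ y), ∃! g : z ⟶ e, prod.map g (𝟙 x) ≫ ev = f

/-- `𝒮` is an elementary topos: finitely complete, cartesian closed, with a
subobject classifier. -/
def IsElementaryTopos (𝒮 : Type u₂) [Category.{v₂} 𝒮] [HasFiniteLimits 𝒮] : Prop :=
  PropCartesianClosed 𝒮 ∧ HasSubobjectClassifier 𝒮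

/-- `C` is a stable class of objects: closed under domains of cartesian arrows. -/
def StableClass (P : 𝒳 ⥤ 𝒮) (C : Set 𝒳) : Prop :=
  ∀ {y x : 𝒳} (φ : y ⟶ x), IsCartesianHom P φ → x ∈ C → y ∈ C

/-- `C` is a definable class of objects. -/
def DefinableClass (P : 𝒳 ⥤ 𝒮) (C : Set 𝒳) : Prop :=
  StableClass P C ∧
  ∀ x : 𝒳, ∃ (I₀ : 𝒮) (m₀ : I₀ ⟶ P.obj x), Mono m₀ ∧
    (∃ (y : 𝒳) (φ : y ⟶ x) (h : P.obj y = I₀),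
        IsCartesianHom P φ ∧ P.map φ = eqToHom h ≫ m₀ ∧ y ∈ C) ∧
    (∀ (J : 𝒮) (u : J ⟶ P.obj x) (y : 𝒳) (φ : y ⟶ x) (h : P.obj y = J),
        IsCartesianHom P φ → P.map φ = eqToHom h ≫ u → y ∈ C →
        ∃ w : J ⟶ I₀, w ≫ m₀ = u)

/-- In a category with a subobject classifier, every mono that is also epi is iso. -/
lemma isIso_of_mono_of_epi_aux [HasTerminal 𝒮] (hso : HasSubobjectClassifier 𝒮)
    {a x : 𝒮} (m : a ⟶ x) (hm : Mono m) (he : Epi m) : IsIso m := by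
  obtain ⟨Ω, t, hcl⟩ := hso
  obtain ⟨χ, hχ, -⟩ := hcl m hm
  have hc : χ = terminal.from x ≫ t := by
    apply he.left_cancellation
    rw [hχ.w, ← Category.assoc]
    congr 1
    exact Subsingleton.elim _ _
  have hcomm : (𝟙 x) ≫ χ = terminal.from x ≫ t := by rw [Category.id_comp, hc]
  have hj : hχ.lift (𝟙 x) (terminal.from x) hcomm ≫ m = 𝟙 x := hχ.lift_fst _ _ _
  have hj' : m ≫ hχ.lift (𝟙 x) (terminal.from x) hcomm = 𝟙 a := by
    rw [← cancel_mono m, Category.assoc, hj, Category.comp_id, Category.id_comp]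
  exact ⟨hχ.lift (𝟙 x) (terminal.from x) hcomm, hj', hj⟩

/-- Descent property: over a topos, membership of a definable class is
reflected and preserved along cartesian arrows over epimorphisms. -/
theorem definable_descent [HasFiniteLimits 𝒮] (htop : IsElementaryTopos 𝒮)
    (P : 𝒳 ⥤ 𝒮) (hP : IsFibration P) (C : Set 𝒳) (hC : DefinableClass P C)
    {y x : 𝒳} (φ : y ⟶ x) (hφ : IsCartesianHom P φ) (he : Epi (P.map φ)) :
    x ∈ C ↔ y ∈ C := by
  obtain ⟨hst, hdef⟩ := hC
  constructor
  · intro hx; exact hst φ hφ hx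
  · intro hy
    obtain ⟨I₀, m₀, hmono, ⟨y₀, ψ, h₀, hψcart, hψmap, hy₀⟩, huniv⟩ := hdef x
    obtain ⟨w, hw⟩ := huniv (P.obj y) (P.map φ) y φ rfl hφ (by simp) hy
    have hepi : Epi m₀ := by
      have : Epi (w ≫ m₀) := hw ▸ he
      exact epi_of_epi w m₀
    have : IsIso m₀ := isIso_of_mono_of_epi_aux htop.2 m₀ hmono hepi
    have hiso : IsIso (P.map ψ) := by rw [hψmap]; infer_instance
    obtain ⟨χ, ⟨hχmap, hχψ⟩, -⟩ := hψcart x (𝟙 x) (inv (P.map ψ)) (by simp)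
    have hψχ : ψ ≫ χ = 𝟙 y₀ := by
      obtain ⟨ψ', hψ', huni⟩ := hψcart y₀ ψ (𝟙 _) (by simp)
      have h1 := huni (ψ ≫ χ)
        ⟨by rw [P.map_comp, hχmap, IsIso.hom_inv_id],
         by rw [Category.assoc, hχψ, Category.comp_id]⟩
      have h2 := huni (𝟙 y₀) ⟨by simp, by simp⟩
      rw [h1, h2]
    have hχcart : IsCartesianHom P χ := by
      intro z θ v hv
      refine ⟨θ ≫ ψ, ⟨?_, ?_⟩, ?_⟩
      · rw [P.map_comp, hv, Category.assoc, ← P.map_comp, hχψ]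
        simp
      · rw [Category.assoc, hψχ, Category.comp_id]
      · intro ψ'' ⟨h1, h2⟩
        rw [← h2, Category.assoc, hχψ, Category.comp_id]
    exact hst χ hχcart hy₀

end FibNotes
end

section
/- Let B have pullbacks and let P : X ⟶ B be a fibration of categories with finite limits having stable disjoint internal sums. If φ : X ⟶ Y is a cocartesian arrow, then φ is monic with respect to vertical arrows: for vertical α₁, α₂ : Z ⟶ X, φ ∘ α₁ = φ ∘ α₂ implies α₁ = α₂. -/
open CategoryTheory CategoryTheory.Limits

namespace FibNotes

universe v₁ u₁ v₂ u₂

variable {𝒳 : Type u₁} [Category.{v₁} 𝒳] {𝒮 : Type u₂} [Category.{v₂} 𝒮]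

/-- Cocartesian liftings exist along every base morphism. -/
def CocartLiftsExist (P : 𝒳 ⥤ 𝒮) : Prop :=
  ∀ (x : 𝒳) (J : 𝒮) (u : P.obj x ⟶ J),
    ∃ (y : 𝒳) (φ : x ⟶ y) (h : P.obj y = J),
      IsCocartesianHom P φ ∧ P.map φ = u ≫ eqToHom h.symm

/-- Beck–Chevalley condition: in a commuting square over a pullback in the
base with cartesian `ψ`, `ψ'` and cocartesian `φ`, the arrow `φ'` is
cocartesian. -/
def BeckChevalley (P : 𝒳 ⥤ 𝒮) : Prop :=
  ∀ {c d a b : 𝒳} (φ' : c ⟶ d) (ψ' : c ⟶ a) (ψ : d ⟶ b) (φ : a ⟶ b),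
    φ' ≫ ψ = ψ' ≫ φ →
    IsCartesianHom P ψ → IsCartesianHom P ψ' → IsCocartesianHom P φ →
    IsPullback (P.map φ') (P.map ψ') (P.map ψ) (P.map φ) →
    IsCocartesianHom P φ'

/-- `P` has internal sums. -/
def HasInternalSums (P : 𝒳 ⥤ 𝒮) : Prop :=
  CocartLiftsExist P ∧ BeckChevalley P

/-- Internal sums are stable: cocartesian arrows are stable under pullback
along arbitrary arrows of the total category. -/
def StableSums (P : 𝒳 ⥤ 𝒮) : Prop :=
  ∀ {w z x y : 𝒳} (fst : w ⟶ z) (snd : w ⟶ x) (g : z ⟶ y) (φ : x ⟶ y),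
    IsCocartesianHom P φ → IsPullback fst snd g φ → IsCocartesianHom P fst

/-- Internal sums are disjoint: for every cocartesian `φ` the fibrewise
diagonal into the pullback of `φ` with itself is cocartesian. -/
def DisjointSums (P : 𝒳 ⥤ 𝒮) : Prop :=
  ∀ {x y q : 𝒳} (φ : x ⟶ y) (π₁ π₂ : q ⟶ x) (δ : x ⟶ q),
    IsCocartesianHom P φ → IsPullback π₁ π₂ φ φ →
    δ ≫ π₁ = 𝟙 x → δ ≫ π₂ = 𝟙 x → IsCocartesianHom P δ

/-- Fibrewise terminal objects exist (and are automatically stable under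
reindexing): over every `I` there is `t` such that every object has a unique
morphism to `t` over each base morphism. -/
def HasFibredTerminals (P : 𝒳 ⥤ 𝒮) : Prop :=
  ∀ I : 𝒮, ∃ (t : 𝒳) (ht : P.obj t = I),
    ∀ (z : 𝒳) (u : P.obj z ⟶ I), ∃! f : z ⟶ t, P.map f = u ≫ eqToHom ht.symm

/-- `P` is a fibration of categories with finite limits: fibres have terminal
objects and pullbacks, stable under reindexing. -/
def FibredFiniteLimits (P : 𝒳 ⥤ 𝒮) : Prop :=
  HasFibredTerminals P ∧ FibrePullbacksExist P ∧ FibrePullbacksStable P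

/-- In a fibration of categories with finite limits with stable disjoint
internal sums, cocartesian arrows are monic w.r.t. vertical arrows. -/
theorem cocartesian_mono_wrt_vertical (P : 𝒳 ⥤ 𝒮) [HasPullbacks 𝒮]
    (hP : IsFibration P) (hfl : FibredFiniteLimits P)
    (hsums : HasInternalSums P) (hstab : StableSums P) (hdisj : DisjointSums P)
    {x y : 𝒳} (φ : x ⟶ y) (hφ : IsCocartesianHom P φ)
    {z : 𝒳} (α₁ α₂ : z ⟶ x)
    (h₁ : IsVerticalHom P α₁) (h₂ : IsVerticalHom P α₂)
    (h : α₁ ≫ φ = α₂ ≫ φ) : α₁ = α₂ := by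
  obtain ⟨-, hfpe, hfps⟩ := hfl
  obtain ⟨hz₁, e₁⟩ := h₁
  obtain ⟨hz₂, e₂⟩ := h₂
  -- base pullback of P φ with itself
  set p₁ : pullback (P.map φ) (P.map φ) ⟶ P.obj x := pullback.fst (P.map φ) (P.map φ) with hp₁
  set p₂ : pullback (P.map φ) (P.map φ) ⟶ P.obj x := pullback.snd (P.map φ) (P.map φ) with hp₂
  have pcond : p₁ ≫ P.map φ = p₂ ≫ P.map φ := pullback.condition
  set d : P.obj x ⟶ pullback (P.map φ) (P.map φ) :=
    pullback.lift (𝟙 _) (𝟙 _) (by simp) with hd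
  have dp₁ : d ≫ p₁ = 𝟙 _ := pullback.lift_fst _ _ _
  have dp₂ : d ≫ p₂ = 𝟙 _ := pullback.lift_snd _ _ _
  -- cartesian lifts of the projections and of p₁ ≫ P φ
  obtain ⟨x₁, θ₁, hx₁, cθ₁, eθ₁⟩ := hP x (pullback (P.map φ) (P.map φ)) p₁
  obtain ⟨x₂, θ₂, hx₂, cθ₂, eθ₂⟩ := hP x (pullback (P.map φ) (P.map φ)) p₂
  obtain ⟨ty, Θ, hty, cΘ, eΘ⟩ := hP y (pullback (P.map φ) (P.map φ)) (p₁ ≫ P.map φ)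
  -- vertical comparison maps β₁ β₂
  obtain ⟨β₁, ⟨eβ₁, fβ₁⟩, uβ₁⟩ := cΘ x₁ (θ₁ ≫ φ) (eqToHom (hx₁.trans hty.symm)) (by
    rw [P.map_comp, eθ₁, eΘ]
    simp [eqToHom_trans_assoc])
  obtain ⟨β₂, ⟨eβ₂, fβ₂⟩, uβ₂⟩ := cΘ x₂ (θ₂ ≫ φ) (eqToHom (hx₂.trans hty.symm)) (by
    rw [P.map_comp, eθ₂, eΘ, Category.assoc, ← pcond]
    simp [eqToHom_trans_assoc])
  -- the fibre pullback over the base pullback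
  obtain ⟨w, a₁, a₂, fp⟩ := hfpe β₁ β₂ ⟨_, eβ₁⟩ ⟨_, eβ₂⟩
  obtain ⟨⟨va₁, ea₁⟩, ⟨va₂, ea₂⟩, -, -, wcomm, -⟩ := id fp
  have hwK : P.obj w = pullback (P.map φ) (P.map φ) := va₁.trans hx₁
  have ePi₁ : P.map (a₁ ≫ θ₁) = eqToHom hwK ≫ p₁ := by
    rw [P.map_comp, ea₁, eθ₁, eqToHom_trans_assoc]
  have ePi₂ : P.map (a₂ ≫ θ₂) = eqToHom hwK ≫ p₂ := by
    rw [P.map_comp, ea₂, eθ₂, eqToHom_trans_assoc]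
  have comm : (a₁ ≫ θ₁) ≫ φ = (a₂ ≫ θ₂) ≫ φ := by
    rw [Category.assoc, Category.assoc, ← fβ₁, ← fβ₂, ← Category.assoc, ← Category.assoc, wcomm]
  -- key universal property : (w, a₁ ≫ θ₁, a₂ ≫ θ₂) is a pullback of φ with φ
  have key : ∀ (t : 𝒳) (f g : t ⟶ x), f ≫ φ = g ≫ φ →
      ∃! k : t ⟶ w, k ≫ (a₁ ≫ θ₁) = f ∧ k ≫ (a₂ ≫ θ₂) = g := by
    intro t f g hfg
    have hbase : P.map f ≫ P.map φ = P.map g ≫ P.map φ := by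
      rw [← P.map_comp, ← P.map_comp, hfg]
    set m : P.obj t ⟶ pullback (P.map φ) (P.map φ) :=
      pullback.lift (P.map f) (P.map g) hbase with hm
    have mp₁ : m ≫ p₁ = P.map f := pullback.lift_fst _ _ _
    have mp₂ : m ≫ p₂ = P.map g := pullback.lift_snd _ _ _
    obtain ⟨f', ⟨ef', ff'⟩, uf'⟩ := cθ₁ t f (m ≫ eqToHom hx₁.symm) (by
      rw [eθ₁]; simp [mp₁])
    obtain ⟨g', ⟨eg', fg'⟩, ug'⟩ := cθ₂ t g (m ≫ eqToHom hx₂.symm) (by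
      rw [eθ₂]; simp [mp₂])
    have hfb : f' ≫ β₁ = g' ≫ β₂ := by
      have pre : P.map (f ≫ φ) = (m ≫ eqToHom hty.symm) ≫ P.map Θ := by
        rw [P.map_comp, eΘ, ← mp₁]
        simp
      refine (cΘ t (f ≫ φ) (m ≫ eqToHom hty.symm) pre).unique ⟨?_, ?_⟩ ⟨?_, ?_⟩
      · rw [P.map_comp, ef', eβ₁]; simp
      · rw [Category.assoc, fβ₁, ← Category.assoc, ff']
      · rw [P.map_comp, eg', eβ₂]; simp
      · rw [Category.assoc, fβ₂, ← Category.assoc, fg', hfg]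
    -- reindex the fibre pullback along m
    obtain ⟨tw, χw, htw, cχw, eχw⟩ := hP w (P.obj t) (m ≫ eqToHom hwK.symm)
    obtain ⟨t₁, χ₁, ht₁, cχ₁, eχ₁⟩ := hP x₁ (P.obj t) (m ≫ eqToHom hx₁.symm)
    obtain ⟨t₂, χ₂, ht₂, cχ₂, eχ₂⟩ := hP x₂ (P.obj t) (m ≫ eqToHom hx₂.symm)
    obtain ⟨ty', χy, hty', cχy, eχy⟩ := hP ty (P.obj t) (m ≫ eqToHom hty.symm)
    obtain ⟨a₁', ⟨ea₁', fa₁'⟩, ua₁'⟩ := cχ₁ tw (χw ≫ a₁) (eqToHom (htw.trans ht₁.symm)) (by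
      rw [P.map_comp, eχw, ea₁, eχ₁]; simp)
    obtain ⟨a₂', ⟨ea₂', fa₂'⟩, ua₂'⟩ := cχ₂ tw (χw ≫ a₂) (eqToHom (htw.trans ht₂.symm)) (by
      rw [P.map_comp, eχw, ea₂, eχ₂]; simp)
    obtain ⟨b₁', ⟨eb₁', fb₁'⟩, -⟩ := cχy t₁ (χ₁ ≫ β₁) (eqToHom (ht₁.trans hty'.symm)) (by
      rw [P.map_comp, eχ₁, eβ₁, eχy]; simp)
    obtain ⟨b₂', ⟨eb₂', fb₂'⟩, -⟩ := cχy t₂ (χ₂ ≫ β₂) (eqToHom (ht₂.trans hty'.symm)) (by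
      rw [P.map_comp, eχ₂, eβ₂, eχy]; simp)
    have fp' := hfps a₁ a₂ β₁ β₂ a₁' a₂' b₁' b₂' χw χ₁ χ₂ χy fp cχw cχ₁ cχ₂ cχy
      ⟨_, ea₁'⟩ ⟨_, ea₂'⟩ ⟨_, eb₁'⟩ ⟨_, eb₂'⟩ fa₁' fa₂' fb₁' fb₂'
    obtain ⟨f'', ⟨ef'', ff''⟩, uf''⟩ := cχ₁ t f' (eqToHom ht₁.symm) (by
      rw [ef', eχ₁]; simp)
    obtain ⟨g'', ⟨eg'', fg''⟩, ug''⟩ := cχ₂ t g' (eqToHom ht₂.symm) (by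
      rw [eg', eχ₂]; simp)
    have hfb'' : f'' ≫ b₁' = g'' ≫ b₂' := by
      have pre : P.map (f' ≫ β₁) = eqToHom hty'.symm ≫ P.map χy := by
        rw [P.map_comp, ef', eβ₁, eχy]; simp
      refine (cχy t (f' ≫ β₁) (eqToHom hty'.symm) pre).unique ⟨?_, ?_⟩ ⟨?_, ?_⟩
      · rw [P.map_comp, ef'', eb₁']; simp
      · rw [Category.assoc, fb₁', ← Category.assoc, ff'']
      · rw [P.map_comp, eg'', eb₂']; simp
      · rw [Category.assoc, fb₂', ← Category.assoc, fg'', hfb]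
    obtain ⟨k'', ⟨vk'', fk₁'', fk₂''⟩, uk''⟩ :=
      fp'.2.2.2.2.2 t f'' g'' ⟨_, ef''⟩ ⟨_, eg''⟩ hfb''
    refine ⟨k'' ≫ χw, ⟨?_, ?_⟩, ?_⟩
    · simp only [Category.assoc]
      slice_lhs 2 3 => rw [← fa₁']
      slice_lhs 1 2 => rw [fk₁'']
      slice_lhs 1 2 => rw [ff'']
      rw [ff']
    · simp only [Category.assoc]
      slice_lhs 2 3 => rw [← fa₂']
      slice_lhs 1 2 => rw [fk₂'']
      slice_lhs 1 2 => rw [fg'']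
      rw [fg']
    · rintro k ⟨hk1, hk2⟩
      have ebase : P.map k ≫ eqToHom hwK = m := by
        apply pullback.hom_ext
        · rw [Category.assoc, ← ePi₁, ← P.map_comp, hk1, mp₁]
        · rw [Category.assoc, ← ePi₂, ← P.map_comp, hk2, mp₂]
      have ek : P.map k = eqToHom htw.symm ≫ P.map χw := by
        rw [eχw, ← ebase]; simp
      obtain ⟨kb, ⟨ekb, fkb⟩, -⟩ := cχw t k (eqToHom htw.symm) ek
      have hka₁ : k ≫ a₁ = f' := by
        refine uf' _ ⟨?_, ?_⟩
        · rw [P.map_comp, ea₁, ← ebase]; simp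
        · rw [Category.assoc, hk1]
      have hka₂ : k ≫ a₂ = g' := by
        refine ug' _ ⟨?_, ?_⟩
        · rw [P.map_comp, ea₂, ← ebase]; simp
        · rw [Category.assoc, hk2]
      have hkb₁ : kb ≫ a₁' = f'' := by
        refine uf'' _ ⟨?_, ?_⟩
        · rw [P.map_comp, ekb, ea₁']; simp
        · rw [Category.assoc, fa₁', ← Category.assoc, fkb, hka₁]
      have hkb₂ : kb ≫ a₂' = g'' := by
        refine ug'' _ ⟨?_, ?_⟩
        · rw [P.map_comp, ekb, ea₂']; simp
        · rw [Category.assoc, fa₂', ← Category.assoc, fkb, hka₂]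
      have : kb = k'' := uk'' _ ⟨⟨_, ekb⟩, hkb₁, hkb₂⟩
      rw [← fkb, this]
  -- package as an IsPullback
  have hpb : IsPullback (a₁ ≫ θ₁) (a₂ ≫ θ₂) φ φ := by
    refine ⟨⟨comm⟩, ⟨PullbackCone.IsLimit.mk comm
      (fun s => ((key s.pt s.fst s.snd s.condition).exists).choose)
      (fun s => ((key s.pt s.fst s.snd s.condition).exists).choose_spec.1)
      (fun s => ((key s.pt s.fst s.snd s.condition).exists).choose_spec.2)
      (fun s mm h1 h2 => (key s.pt s.fst s.snd s.condition).unique ⟨h1, h2⟩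
        ((key s.pt s.fst s.snd s.condition).exists).choose_spec)⟩⟩
  -- the fibrewise diagonal, cocartesian by disjointness
  obtain ⟨Δ, ⟨Δ1, Δ2⟩, -⟩ := key x (𝟙 x) (𝟙 x) rfl
  obtain ⟨hk, ⟨hk1, hk2⟩, -⟩ := key z α₁ α₂ h
  have Δcocart : IsCocartesianHom P Δ := hdisj φ (a₁ ≫ θ₁) (a₂ ≫ θ₂) Δ hφ hpb Δ1 Δ2
  -- cartesian lift of the base diagonal
  obtain ⟨w', ρ, hw', cρ, eρ⟩ := hP w (P.obj x) (d ≫ eqToHom hwK.symm)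
  have eΔK : P.map Δ ≫ eqToHom hwK = d := by
    apply pullback.hom_ext
    · rw [Category.assoc, ← ePi₁, ← P.map_comp, Δ1, dp₁]; simp
    · rw [Category.assoc, ← ePi₂, ← P.map_comp, Δ2, dp₂]; simp
  obtain ⟨Δ', ⟨eΔ', fΔ'⟩, -⟩ := cρ x Δ (eqToHom hw'.symm) (by
    rw [eρ, ← eΔK]; simp)
  -- (Δ', 𝟙 x) is a pullback of Δ along ρ
  have hpb2 : IsPullback Δ' (𝟙 x) ρ Δ := by
    have comm2 : Δ' ≫ ρ = 𝟙 x ≫ Δ := by rw [fΔ', Category.id_comp]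
    refine ⟨⟨comm2⟩, ⟨PullbackCone.IsLimit.mk comm2 (fun s => s.snd) (fun s => ?_)
      (fun s => Category.comp_id _) (fun s mm h1 h2 => by simpa using h2)⟩⟩
    have hbase : P.map s.fst = P.map s.snd ≫ eqToHom hw'.symm := by
      have h0 : P.map s.fst ≫ P.map ρ = P.map s.snd ≫ P.map Δ := by
        rw [← P.map_comp, ← P.map_comp, s.condition]
      rw [eρ] at h0
      have hΔ : P.map Δ = d ≫ eqToHom hwK.symm := by rw [← eΔK]; simp
      rw [hΔ] at h0
      have h1 : (P.map s.fst ≫ eqToHom hw' ≫ d) ≫ eqToHom hwK.symm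
          = (P.map s.snd ≫ d) ≫ eqToHom hwK.symm := by
        simpa [Category.assoc] using h0
      have h2 : P.map s.fst ≫ eqToHom hw' ≫ d = P.map s.snd ≫ d := by
        have := congrArg (fun q => q ≫ eqToHom hwK) h1
        simpa using this
      have h3 := congrArg (fun q => q ≫ p₁) h2
      simp only [Category.assoc, dp₁, Category.comp_id] at h3
      rw [← h3]; simp
    have pre : P.map (s.snd ≫ Δ) = (P.map s.snd ≫ eqToHom hw'.symm) ≫ P.map ρ := by
      rw [P.map_comp, eρ, ← eΔK]; simp
    exact (cρ s.pt (s.snd ≫ Δ) (P.map s.snd ≫ eqToHom hw'.symm) pre).unique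
      ⟨by rw [P.map_comp, eΔ'], by rw [Category.assoc, fΔ']⟩
      ⟨hbase, s.condition⟩
  have Δ'cocart : IsCocartesianHom P Δ' := hstab Δ' (𝟙 x) ρ Δ Δcocart hpb2
  -- the two retractions of Δ' agree
  have er₁ : P.map (ρ ≫ (a₁ ≫ θ₁)) = eqToHom hw' := by
    rw [P.map_comp, eρ, ePi₁]
    simp [dp₁]
  have er₂ : P.map (ρ ≫ (a₂ ≫ θ₂)) = eqToHom hw' := by
    rw [P.map_comp, eρ, ePi₂]
    simp [dp₂]
  have hρeq : ρ ≫ (a₁ ≫ θ₁) = ρ ≫ (a₂ ≫ θ₂) := by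
    refine (Δ'cocart x (𝟙 x) (eqToHom hw') (by rw [P.map_id, eΔ']; simp)).unique
      ⟨er₁, ?_⟩ ⟨er₂, ?_⟩
    · rw [← Category.assoc, fΔ', Δ1]
    · rw [← Category.assoc, fΔ', Δ2]
  -- factor the pairing of α₁, α₂ through ρ and conclude
  have ehkK : P.map hk ≫ eqToHom hwK = eqToHom hz₁ ≫ d := by
    apply pullback.hom_ext
    · rw [Category.assoc, ← ePi₁, ← P.map_comp, hk1, e₁]
      simp [dp₁, ← hp₁]
    · rw [Category.assoc, ← ePi₂, ← P.map_comp, hk2, e₂]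
      simp [dp₂, ← hp₂]
  have ehk : P.map hk = eqToHom hz₁ ≫ d ≫ eqToHom hwK.symm := by
    have := congrArg (fun q => q ≫ eqToHom hwK.symm) ehkK
    simpa using this
  obtain ⟨kb, ⟨-, fkb⟩, -⟩ := cρ z hk (eqToHom (hz₁.trans hw'.symm)) (by
    rw [eρ, ehk]; simp [eqToHom_trans_assoc])
  calc α₁ = hk ≫ (a₁ ≫ θ₁) := hk1.symm
    _ = kb ≫ (ρ ≫ (a₁ ≫ θ₁)) := by rw [← fkb, Category.assoc]
    _ = kb ≫ (ρ ≫ (a₂ ≫ θ₂)) := by rw [hρeq]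
    _ = hk ≫ (a₂ ≫ θ₂) := by rw [← fkb, Category.assoc]
    _ = α₂ := hk2

end FibNotes
end

section
/- Let B have pullbacks and P : X ⟶ B be a fibration of categories with finite limits having stable internal sums. Then the following are equivalent: (1) internal sums are disjoint (fibrewise diagonals of cocartesian arrows are cocartesian); (2) if φ and φ ∘ ψ are cocartesian then ψ is cocartesian; (3) if α is vertical and both φ and φ ∘ α are cocartesian then α is an isomorphism; (4) every commuting square with cocartesian horizontal arrows and vertical side arrows is a pullback in X. -/
open CategoryTheory CategoryTheory.Limits

namespace FibNotes

universe v₁ u₁ v₂ u₂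

variable {𝒳 : Type u₁} [Category.{v₁} 𝒳] {𝒮 : Type u₂} [Category.{v₂} 𝒮]

section Auxiliary

variable {P : 𝒳 ⥤ 𝒮}

lemma cart_cancel_s16 {d b : 𝒳} {χ : d ⟶ b} (hχ : IsCartesianHom P χ) {z : 𝒳} {f g : z ⟶ d}
    (h1 : f ≫ χ = g ≫ χ) (h2 : P.map f = P.map g) : f = g := by
  obtain ⟨w, hw, huniq⟩ := hχ z (g ≫ χ) (P.map g) (by simp)
  have e1 : f = w := huniq f ⟨h2, h1⟩
  have e2 : g = w := huniq g ⟨rfl, rfl⟩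
  rw [e1, e2]

lemma cocart_cancel {d b : 𝒳} {χ : d ⟶ b} (hχ : IsCocartesianHom P χ) {z : 𝒳} {f g : b ⟶ z}
    (h1 : χ ≫ f = χ ≫ g) (h2 : P.map f = P.map g) : f = g := by
  obtain ⟨w, hw, huniq⟩ := hχ z (χ ≫ g) (P.map g) (by simp)
  have e1 : f = w := huniq f ⟨h2, h1⟩
  have e2 : g = w := huniq g ⟨rfl, rfl⟩
  rw [e1, e2]

lemma cocart_of_isIso {x y : 𝒳} (φ : x ⟶ y) [IsIso φ] : IsCocartesianHom P φ := by
  intro z ψ v hv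
  refine ⟨inv φ ≫ ψ, ⟨?_, by simp⟩, ?_⟩
  · rw [Functor.map_comp, hv, ← Functor.map_comp_assoc]
    simp
  · rintro θ' ⟨hθ'1, hθ'2⟩
    rw [← hθ'2]; simp

lemma cocart_id (x : 𝒳) : IsCocartesianHom P (𝟙 x) := cocart_of_isIso _

lemma cocart_comp {x y z : 𝒳} {φ : x ⟶ y} {φ' : y ⟶ z} (h : IsCocartesianHom P φ)
    (h' : IsCocartesianHom P φ') : IsCocartesianHom P (φ ≫ φ') := by
  intro w ψ v hv
  obtain ⟨θ₁, ⟨hθ₁v, hθ₁c⟩, hθ₁u⟩ := h w ψ (P.map φ' ≫ v) (by simpa using hv)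
  obtain ⟨θ, ⟨hθv, hθc⟩, hθu⟩ := h' w θ₁ v (by rw [hθ₁v])
  refine ⟨θ, ⟨hθv, by rw [Category.assoc, hθc, hθ₁c]⟩, ?_⟩
  rintro θ' ⟨hθ'v, hθ'c⟩
  refine hθu θ' ⟨hθ'v, ?_⟩
  refine hθ₁u (φ' ≫ θ') ⟨by rw [Functor.map_comp, hθ'v], by simpa using hθ'c⟩ ▸ rfl

lemma cocart_cancel_left {x y z : 𝒳} {φ : x ⟶ y} {g : y ⟶ z} (h : IsCocartesianHom P φ)
    (hc : IsCocartesianHom P (φ ≫ g)) : IsCocartesianHom P g := by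
  intro w ψ v hv
  obtain ⟨θ, ⟨hθv, hθc⟩, hθu⟩ := hc w (φ ≫ ψ) v
    (by rw [Functor.map_comp, hv, Functor.map_comp, Category.assoc])
  have hgθ : g ≫ θ = ψ := by
    refine cocart_cancel h (by simpa using hθc) ?_
    rw [Functor.map_comp, hθv, hv]
  exact ⟨θ, ⟨hθv, hgθ⟩, fun θ' ⟨h1, h2⟩ => hθu θ' ⟨h1, by rw [Category.assoc, h2]⟩⟩

lemma vert_cocart_isIso {a b : 𝒳} {α : a ⟶ b} (hv : IsVerticalHom P α)
    (hc : IsCocartesianHom P α) : IsIso α := by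
  obtain ⟨h, hm⟩ := hv
  obtain ⟨θ, ⟨hθv, hθc⟩, _⟩ := hc a (𝟙 a) (eqToHom h.symm) (by simp [hm])
  refine ⟨θ, hθc, ?_⟩
  refine cocart_cancel hc ?_ ?_
  · rw [← Category.assoc, hθc, Category.id_comp, Category.comp_id]
  · rw [Functor.map_comp, hθv, hm]; simp

lemma mk_isPullback {w x y z : 𝒳} {fst : w ⟶ x} {snd : w ⟶ y} {f : x ⟶ z} {g : y ⟶ z}
    (comm : fst ≫ f = snd ≫ g)
    (H : ∀ (e : 𝒳) (m : e ⟶ x) (n : e ⟶ y), m ≫ f = n ≫ g →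
      ∃! h : e ⟶ w, h ≫ fst = m ∧ h ≫ snd = n) :
    IsPullback fst snd f g := by
  refine IsPullback.of_isLimit (PullbackCone.IsLimit.mk comm
    (fun s => (H _ s.fst s.snd s.condition).exists.choose)
    (fun s => (H _ s.fst s.snd s.condition).exists.choose_spec.1)
    (fun s => (H _ s.fst s.snd s.condition).exists.choose_spec.2)
    (fun s m h1 h2 => ?_))
  obtain ⟨l, hl, hu⟩ := H _ s.fst s.snd s.condition
  rw [hu m ⟨h1, h2⟩]
  exact (hu _ (H _ s.fst s.snd s.condition).exists.choose_spec).symm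

lemma pb_of_cart [HasPullbacks 𝒮] (hP : IsFibration P)
    {a d b : 𝒳} (g : a ⟶ b) (χ : d ⟶ b) (hχ : IsCartesianHom P χ) :
    ∃ (c : 𝒳) (ψ' : c ⟶ a) (φ' : c ⟶ d),
      IsCartesianHom P ψ' ∧ IsPullback ψ' φ' g χ := by
  obtain ⟨c, ψ', hc, hcart, hPψ'⟩ :=
    hP a (pullback (P.map g) (P.map χ)) (pullback.fst (P.map g) (P.map χ))
  obtain ⟨φ', ⟨hPφ', hφ'χ⟩, _⟩ := hχ c (ψ' ≫ g) (eqToHom hc ≫ pullback.snd (P.map g) (P.map χ))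
    (by rw [Functor.map_comp, hPψ', Category.assoc, Category.assoc]
        rw [pullback.condition])
  refine ⟨c, ψ', φ', hcart, mk_isPullback hφ'χ.symm ?_⟩
  intro e m n hcone
  have hbase : P.map m ≫ P.map g = P.map n ≫ P.map χ := by
    rw [← Functor.map_comp, ← Functor.map_comp, hcone]
  set l : P.obj e ⟶ pullback (P.map g) (P.map χ) := pullback.lift (P.map m) (P.map n) hbase with hl
  obtain ⟨h, ⟨hPh, hhψ'⟩, hhu⟩ := hcart e m (l ≫ eqToHom hc.symm)
    (by rw [hPψ']; simp [hl]; exact (pullback.lift_fst _ _ _).symm)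
  have hhφ' : h ≫ φ' = n := by
    refine cart_cancel_s16 hχ ?_ ?_
    · rw [Category.assoc, hφ'χ, ← Category.assoc, hhψ', hcone]
    · rw [Functor.map_comp, hPh, hPφ']; simp [hl]; exact pullback.lift_snd _ _ _
  refine ⟨h, ⟨hhψ', hhφ'⟩, ?_⟩
  rintro h₁ ⟨h₁ψ', h₁φ'⟩
  refine hhu h₁ ⟨?_, h₁ψ'⟩
  have : P.map h₁ ≫ eqToHom hc = l := by
    apply pullback.hom_ext
    · rw [Category.assoc, ← hPψ', ← Functor.map_comp, h₁ψ', hl, pullback.lift_fst]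
    · rw [Category.assoc, ← hPφ', ← Functor.map_comp, h₁φ', hl, pullback.lift_snd]
  rw [← this]; simp

lemma pb_of_vert (hP : IsFibration P) (hfl : FibredFiniteLimits P)
    {u v y : 𝒳} (β : u ⟶ v) (hβ : IsVerticalHom P β) (ψ : y ⟶ v) :
    ∃ (q : 𝒳) (p : q ⟶ u) (π : q ⟶ y),
      IsVerticalHom P π ∧ IsPullback p π β ψ := by
  obtain ⟨hb, hPβ⟩ := hβ
  obtain ⟨v', χv, hv, hχv, hPχv⟩ := hP v (P.obj y) (P.map ψ)
  obtain ⟨u', χu, hu, hχu, hPχu⟩ := hP u (P.obj y) (P.map ψ ≫ eqToHom hb.symm)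
  obtain ⟨lam, ⟨hPlam, hlam⟩, _⟩ := hχv y ψ (eqToHom hv.symm) (by rw [hPχv]; simp)
  obtain ⟨β', ⟨hPβ', hβ'⟩, _⟩ := hχv u' (χu ≫ β) (eqToHom (hu.trans hv.symm))
    (by rw [Functor.map_comp, hPβ, hPχu, hPχv]; simp)
  obtain ⟨q, π₁, π₂, hfp⟩ := hfl.2.1 β' lam ⟨hu.trans hv.symm, hPβ'⟩ ⟨hv.symm, hPlam⟩
  obtain ⟨e₁, hPπ₁⟩ := hfp.1
  obtain ⟨e₂, hPπ₂⟩ := hfp.2.1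
  have hfpcomm : π₁ ≫ β' = π₂ ≫ lam := hfp.2.2.2.2.1
  refine ⟨q, π₁ ≫ χu, π₂, ⟨e₂, hPπ₂⟩, mk_isPullback ?_ ?_⟩
  · rw [Category.assoc, ← hβ', ← Category.assoc, hfpcomm, Category.assoc, hlam]
  · intro e m n hcone
    have base : P.map m ≫ eqToHom hb = P.map n ≫ P.map ψ := by
      rw [← hPβ, ← Functor.map_comp, hcone, Functor.map_comp]
    have base' : P.map m = P.map n ≫ P.map ψ ≫ eqToHom hb.symm := by
      rw [← Category.assoc, ← base]; simp
    obtain ⟨m₁, ⟨hPm₁, hm₁⟩, _⟩ := hχu e m (P.map n ≫ eqToHom hu.symm)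
      (by rw [hPχu, base']; simp)
    have hconeq : m₁ ≫ β' = n ≫ lam := by
      refine cart_cancel_s16 hχv ?_ ?_
      · rw [Category.assoc, hβ', ← Category.assoc, hm₁, hcone, Category.assoc, hlam]
      · rw [Functor.map_comp, Functor.map_comp, hPm₁, hPβ', hPlam]; simp
    -- reindex the fibre pullback along `P.map n`
    obtain ⟨y', θy, hy', hθy, hPθy⟩ := hP y (P.obj e) (P.map n)
    obtain ⟨q', θq, hq', hθq, hPθq⟩ := hP q (P.obj e) (P.map n ≫ eqToHom e₂.symm)
    obtain ⟨u'', θu, hu'', hθu, hPθu⟩ := hP u' (P.obj e) (P.map n ≫ eqToHom hu.symm)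
    obtain ⟨v'', θv, hv'', hθv, hPθv⟩ := hP v' (P.obj e) (P.map n ≫ eqToHom hv.symm)
    obtain ⟨α₁', ⟨hPα₁', hα₁'⟩, _⟩ := hθu q' (θq ≫ π₁) (eqToHom (hq'.trans hu''.symm))
      (by rw [Functor.map_comp, hPθq, hPπ₁, hPθu]; simp)
    obtain ⟨α₂', ⟨hPα₂', hα₂'⟩, _⟩ := hθy q' (θq ≫ π₂) (eqToHom (hq'.trans hy'.symm))
      (by rw [Functor.map_comp, hPθq, hPπ₂, hPθy]; simp)
    obtain ⟨β₁', ⟨hPβ₁', hβ₁'⟩, _⟩ := hθv u'' (θu ≫ β') (eqToHom (hu''.trans hv''.symm))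
      (by rw [Functor.map_comp, hPθu, hPβ', hPθv]; simp)
    obtain ⟨β₂', ⟨hPβ₂', hβ₂'⟩, _⟩ := hθv y' (θy ≫ lam) (eqToHom (hy'.trans hv''.symm))
      (by rw [Functor.map_comp, hPθy, hPlam, hPθv]; simp)
    have hfp' : IsFibrePullback P α₁' α₂' β₁' β₂' :=
      hfl.2.2 π₁ π₂ β' lam α₁' α₂' β₁' β₂' θq θu θy θv hfp hθq hθu hθy hθv
        ⟨_, hPα₁'⟩ ⟨_, hPα₂'⟩ ⟨_, hPβ₁'⟩ ⟨_, hPβ₂'⟩ hα₁' hα₂' hβ₁' hβ₂'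
    obtain ⟨m₁', ⟨hPm₁', hm₁'⟩, _⟩ := hθu e m₁ (eqToHom hu''.symm)
      (by rw [hPm₁, hPθu]; simp)
    obtain ⟨n', ⟨hPn', hn'⟩, _⟩ := hθy e n (eqToHom hy'.symm)
      (by rw [hPθy]; simp)
    have hcone' : m₁' ≫ β₁' = n' ≫ β₂' := by
      refine cart_cancel_s16 hθv ?_ ?_
      · rw [Category.assoc, hβ₁', ← Category.assoc, hm₁', hconeq, Category.assoc, hβ₂',
          ← Category.assoc, hn']
      · rw [Functor.map_comp, Functor.map_comp, hPm₁', hPn', hPβ₁', hPβ₂']; simp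
    obtain ⟨γ, ⟨hγv, hγ1, hγ2⟩, hγu⟩ := hfp'.2.2.2.2.2 e m₁' n'
      ⟨hu''.symm, hPm₁'⟩ ⟨hy'.symm, hPn'⟩ hcone'
    have hhπ₁ : (γ ≫ θq) ≫ π₁ = m₁ := by
      rw [Category.assoc, ← hα₁', ← Category.assoc, hγ1, hm₁']
    have hhπ₂ : (γ ≫ θq) ≫ π₂ = n := by
      rw [Category.assoc, ← hα₂', ← Category.assoc, hγ2, hn']
    refine ⟨γ ≫ θq, ⟨by rw [← Category.assoc, hhπ₁, hm₁], hhπ₂⟩, ?_⟩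
    rintro h₂ ⟨hh₂m, hh₂n⟩
    have hPh₂ : P.map h₂ = P.map n ≫ eqToHom e₂.symm := by
      rw [← hh₂n, Functor.map_comp, hPπ₂]; simp
    have hh₂π₁ : h₂ ≫ π₁ = m₁ := by
      refine cart_cancel_s16 hχu ?_ ?_
      · rw [Category.assoc, hh₂m, hm₁]
      · rw [Functor.map_comp, hPh₂, hPπ₁, hPm₁]; simp
    obtain ⟨γ₂, ⟨hPγ₂, hγ₂⟩, _⟩ := hθq e h₂ (eqToHom hq'.symm)
      (by rw [hPh₂, hPθq]; simp)
    have hγ₂α₁ : γ₂ ≫ α₁' = m₁' := by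
      refine cart_cancel_s16 hθu ?_ ?_
      · rw [Category.assoc, hα₁', ← Category.assoc, hγ₂, hh₂π₁, hm₁']
      · rw [Functor.map_comp, hPγ₂, hPα₁', hPm₁']; simp
    have hγ₂α₂ : γ₂ ≫ α₂' = n' := by
      refine cart_cancel_s16 hθy ?_ ?_
      · rw [Category.assoc, hα₂', ← Category.assoc, hγ₂, hh₂n, hn']
      · rw [Functor.map_comp, hPγ₂, hPα₂', hPn']; simp
    have : γ₂ = γ := hγu γ₂ ⟨⟨hq'.symm, hPγ₂⟩, hγ₂α₁, hγ₂α₂⟩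
    rw [← hγ₂, this]

lemma pb_along [HasPullbacks 𝒮] (hP : IsFibration P) (hfl : FibredFiniteLimits P)
    {a a' cc : 𝒳} (g : a ⟶ cc) (ρ : a' ⟶ cc) :
    ∃ (q : 𝒳) (fst : q ⟶ a) (snd : q ⟶ a'), IsPullback fst snd g ρ := by
  obtain ⟨ahat, χ, h, hχ, hPχ⟩ := hP cc (P.obj a) (P.map g)
  obtain ⟨ghat, ⟨hPg, hgfac⟩, _⟩ := hχ a g (eqToHom h.symm) (by rw [hPχ]; simp)
  obtain ⟨c, ψ', φ', hψ'cart, hpb1⟩ := pb_of_cart hP ρ χ hχ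
  obtain ⟨q, p, π, hπv, hpb2⟩ := pb_of_vert hP hfl ghat ⟨h.symm, hPg⟩ φ'
  refine ⟨q, p, π ≫ ψ', ?_⟩
  have := hpb2.paste_vert hpb1.flip
  rwa [hgfac] at this

end Auxiliary

/-- For a fibration of categories with finite limits with stable internal
sums, the following are equivalent: disjointness of sums; left cancellation
of cocartesian arrows; vertical arrows with cocartesian composite being isos;
commuting squares of cocartesian and vertical arrows being pullbacks. -/
theorem disjointness_tfae (P : 𝒳 ⥤ 𝒮) [HasPullbacks 𝒮]
    (hP : IsFibration P) (hfl : FibredFiniteLimits P)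
    (hsums : HasInternalSums P) (hstab : StableSums P) :
    List.TFAE
      [DisjointSums P,
       ∀ (a b c : 𝒳) (ψ : a ⟶ b) (φ : b ⟶ c),
         IsCocartesianHom P φ → IsCocartesianHom P (ψ ≫ φ) →
         IsCocartesianHom P ψ,
       ∀ (a b c : 𝒳) (α : a ⟶ b) (φ : b ⟶ c),
         IsVerticalHom P α → IsCocartesianHom P φ →
         IsCocartesianHom P (α ≫ φ) → IsIso α,
       ∀ (x u y v : 𝒳) (φ : x ⟶ u) (ψ : y ⟶ v) (α : x ⟶ y) (β : u ⟶ v),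
         IsCocartesianHom P φ → IsCocartesianHom P ψ →
         IsVerticalHom P α → IsVerticalHom P β →
         φ ≫ β = α ≫ ψ → IsPullback φ α β ψ] := by
  tfae_have 1 → 2 := by
    intro hdisj a b c ψ φ hφ hψφ
    obtain ⟨q, Q₁, Q₂, hq⟩ := pb_along hP hfl φ φ
    have hδw : (𝟙 b) ≫ φ = (𝟙 b) ≫ φ := rfl
    set δ : b ⟶ q := hq.lift (𝟙 b) (𝟙 b) hδw with hδ
    have hδ₁ : δ ≫ Q₁ = 𝟙 b := hq.lift_fst _ _ _
    have hδ₂ : δ ≫ Q₂ = 𝟙 b := hq.lift_snd _ _ _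
    have hδcoc : IsCocartesianHom P δ := hdisj φ Q₁ Q₂ δ hφ hq hδ₁ hδ₂
    obtain ⟨r, R₁, R₂, hr⟩ := pb_along hP hfl φ (ψ ≫ φ)
    have hR₁coc : IsCocartesianHom P R₁ := hstab R₁ R₂ φ (ψ ≫ φ) hψφ hr
    have hsw : ψ ≫ φ = (𝟙 a) ≫ (ψ ≫ φ) := by simp
    set s : a ⟶ r := hr.lift ψ (𝟙 a) hsw with hs
    have hs₁ : s ≫ R₁ = ψ := hr.lift_fst _ _ _
    have hs₂ : s ≫ R₂ = 𝟙 a := hr.lift_snd _ _ _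
    have htw : (R₂ ≫ ψ) ≫ φ = R₁ ≫ φ := by rw [Category.assoc, ← hr.w]
    set t : r ⟶ q := hq.lift (R₂ ≫ ψ) R₁ htw with ht
    have ht₁ : t ≫ Q₁ = R₂ ≫ ψ := hq.lift_fst _ _ _
    have ht₂ : t ≫ Q₂ = R₁ := hq.lift_snd _ _ _
    have hst : IsPullback s ψ t δ := by
      refine mk_isPullback ?_ ?_
      · refine hq.hom_ext ?_ ?_
        · rw [Category.assoc, Category.assoc, ht₁, ← Category.assoc, hs₂, Category.id_comp,
            hδ₁, Category.comp_id]
        · rw [Category.assoc, Category.assoc, ht₂, hs₁, hδ₂, Category.comp_id]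
      · intro e f g hfg
        have hfR₁ : f ≫ R₁ = g := by
          have := congrArg (· ≫ Q₂) hfg
          simpa [ht₂, hδ₂] using this
        have hfR₂ψ : (f ≫ R₂) ≫ ψ = g := by
          have := congrArg (· ≫ Q₁) hfg
          simpa [ht₁, hδ₁] using this
        refine ⟨f ≫ R₂, ⟨?_, hfR₂ψ⟩, ?_⟩
        · refine hr.hom_ext ?_ ?_
          · rw [Category.assoc, Category.assoc, hs₁, ← Category.assoc, hfR₂ψ, hfR₁]
          · rw [Category.assoc, Category.assoc, hs₂, Category.comp_id]
        · rintro h' ⟨h's, h'ψ⟩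
          rw [← h's, Category.assoc, hs₂, Category.comp_id]
    have hscoc : IsCocartesianHom P s := hstab s ψ t δ hδcoc hst
    have : IsCocartesianHom P (s ≫ R₁) := cocart_comp hscoc hR₁coc
    rwa [hs₁] at this
  tfae_have 2 → 3 := by
    intro h2 a b c α φ hαv hφ hαφ
    exact vert_cocart_isIso hαv (h2 a b c α φ hφ hαφ)
  tfae_have 3 → 2 := by
    intro h3 a b c ψ φ hφ hψφ
    obtain ⟨b₀, φ₀, h, hφ₀coc, hPφ₀⟩ := hsums.1 a (P.obj b) (P.map ψ)
    obtain ⟨α, ⟨hPα, hα⟩, _⟩ := hφ₀coc b ψ (eqToHom h) (by rw [hPφ₀]; simp)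
    have hαφcoc : IsCocartesianHom P (α ≫ φ) := by
      refine cocart_cancel_left hφ₀coc ?_
      have : φ₀ ≫ α ≫ φ = ψ ≫ φ := by rw [← Category.assoc, hα]
      rwa [this]
    have : IsIso α := h3 b₀ b c α φ ⟨h, hPα⟩ hφ hαφcoc
    have : IsCocartesianHom P (φ₀ ≫ α) := cocart_comp hφ₀coc (cocart_of_isIso α)
    rwa [hα] at this
  tfae_have 3 → 4 := by
    intro h3 x u y v φ ψ α β hφ hψ hαv hβv hsq
    obtain ⟨q, p, π, hπv, hpb⟩ := pb_of_vert hP hfl β hβv ψ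
    set m : x ⟶ q := hpb.lift φ α hsq with hm
    have hmp : m ≫ p = φ := hpb.lift_fst _ _ _
    have hmπ : m ≫ π = α := hpb.lift_snd _ _ _
    obtain ⟨e₂, hPπ⟩ := hπv
    obtain ⟨hα, hPα⟩ := hαv
    have hPm : P.map m = eqToHom (hα.trans e₂.symm) := by
      have : P.map m ≫ eqToHom e₂ = eqToHom hα := by
        rw [← hPπ, ← Functor.map_comp, hmπ, hPα]
      calc P.map m = (P.map m ≫ eqToHom e₂) ≫ eqToHom e₂.symm := by simp
        _ = eqToHom hα ≫ eqToHom e₂.symm := by rw [this]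
        _ = _ := by simp
    have hpcoc : IsCocartesianHom P p := hstab p π β ψ hψ hpb
    have hmcoc : IsCocartesianHom P (m ≫ p) := by rw [hmp]; exact hφ
    have hmiso : IsIso m := h3 x q u m p ⟨_, hPm⟩ hpcoc hmcoc
    refine mk_isPullback hsq ?_
    intro e f g hfg
    refine ⟨hpb.lift f g hfg ≫ inv m, ⟨?_, ?_⟩, ?_⟩
    · rw [Category.assoc, ← hmp, ← Category.assoc (inv m), IsIso.inv_hom_id, Category.id_comp,
        hpb.lift_fst]
    · rw [Category.assoc, ← hmπ, ← Category.assoc (inv m), IsIso.inv_hom_id, Category.id_comp,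
        hpb.lift_snd]
    · rintro h' ⟨h'f, h'g⟩
      have : h' ≫ m = hpb.lift f g hfg := by
        refine hpb.hom_ext ?_ ?_
        · rw [Category.assoc, hmp, h'f, hpb.lift_fst]
        · rw [Category.assoc, hmπ, h'g, hpb.lift_snd]
      rw [← this, Category.assoc, IsIso.hom_inv_id, Category.comp_id]
  tfae_have 4 → 3 := by
    intro h4 a b c α φ hαv hφ hαφ
    have hid : IsVerticalHom P (𝟙 c) := ⟨rfl, by simp⟩
    have hpb : IsPullback (α ≫ φ) α (𝟙 c) φ :=
      h4 a c b c (α ≫ φ) φ α (𝟙 c) hαφ hφ hαv hid (by simp)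
    have hlw : φ ≫ 𝟙 c = (𝟙 b) ≫ φ := by simp
    set l : b ⟶ a := hpb.lift φ (𝟙 b) hlw with hl
    have hl₁ : l ≫ (α ≫ φ) = φ := hpb.lift_fst _ _ _
    have hl₂ : l ≫ α = 𝟙 b := hpb.lift_snd _ _ _
    refine ⟨l, ?_, hl₂⟩
    refine hpb.hom_ext ?_ ?_
    · rw [Category.assoc, hl₁, Category.id_comp]
    · rw [Category.assoc, hl₂, Category.comp_id, Category.id_comp]
  tfae_have 2 → 1 := by
    intro h2 x y q φ π₁ π₂ δ hφ hpb hδ₁ hδ₂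
    have hπ₁coc : IsCocartesianHom P π₁ := hstab π₁ π₂ φ φ hφ hpb
    have : IsCocartesianHom P (δ ≫ π₁) := by rw [hδ₁]; exact cocart_id x
    exact h2 x q x δ π₁ hπ₁coc this
  tfae_finish

end FibNotes
end

section
/- Let F : B ⟶ C be a pullback-preserving functor between categories with pullbacks. Then in the glueing fibration gl(F) = ∂₁ : C↓F ⟶ B, a morphism (f, u) : (b : B_obj ⟶ FJ) ⟶ (a : A ⟶ FI) over u : J ⟶ I (given by f : B_obj ⟶ A with a ∘ f = Fu ∘ b) is cocartesian if and only if f is an isomorphism in C, and gl(F) has internal sums satisfying the Beck–Chevalley condition. -/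
open CategoryTheory CategoryTheory.Limits

namespace FibNotes

universe v₁ u₁ v₂ u₂

variable {𝒳 : Type u₁} [Category.{v₁} 𝒳] {𝒮 : Type u₂} [Category.{v₂} 𝒮]

variable {𝒞 : Type u₁} [Category.{v₁} 𝒞]


section Aux

variable {ℬ : Type u₂} [Category.{v₂} ℬ]

private lemma glue_iso_cocart (F : ℬ ⥤ 𝒞) {a b : Comma (𝟭 𝒞) F} (m : a ⟶ b)
    (hm : IsIso m.left) : IsCocartesianHom (Comma.snd (𝟭 𝒞) F) m := by
  intro z ψ v hv
  simp only [Comma.snd_map] at hv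
  have mw : m.left ≫ b.hom = a.hom ≫ F.map m.right := by simpa using m.w
  have ψw : ψ.left ≫ z.hom = a.hom ≫ F.map ψ.right := by simpa using ψ.w
  refine ⟨⟨inv m.left ≫ ψ.left, v, ?_⟩, ⟨rfl, ?_⟩, ?_⟩
  · simp only [Functor.id_map, Category.assoc, ψw, hv, F.map_comp]
    rw [← reassoc_of% mw, IsIso.inv_hom_id_assoc]
  · apply CommaMorphism.ext
    · simp
    · simpa using hv.symm
  · intro θ ⟨hθv, hθc⟩
    simp only [Comma.snd_map] at hθv
    apply CommaMorphism.ext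
    · have : m.left ≫ θ.left = ψ.left := congrArg CommaMorphism.left hθc
      simp [← this]
    · simpa using hθv

private lemma glue_cocart_iso (F : ℬ ⥤ 𝒞) {a b : Comma (𝟭 𝒞) F} (m : a ⟶ b)
    (hm : IsCocartesianHom (Comma.snd (𝟭 𝒞) F) m) : IsIso m.left := by
  have mw : m.left ≫ b.hom = a.hom ≫ F.map m.right := by simpa using m.w
  obtain ⟨θ, ⟨hθv, hθc⟩, _⟩ :=
    hm ⟨a.left, b.right, a.hom ≫ F.map m.right⟩ ⟨𝟙 a.left, m.right, by simp⟩
      (𝟙 b.right) (by simp; exact (Category.comp_id _).symm)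
  simp only [Comma.snd_map] at hθv
  have h1 : m.left ≫ θ.left = 𝟙 a.left := congrArg CommaMorphism.left hθc
  obtain ⟨τ, _, hτu⟩ := hm b m (𝟙 b.right) (by simp; exact (Category.comp_id _).symm)
  have e1 : (𝟙 b : b ⟶ b) = τ := hτu (𝟙 b) ⟨by simp, by simp⟩
  have e2 : θ ≫ (⟨m.left, 𝟙 b.right, by simpa using mw⟩ :
      (⟨a.left, b.right, a.hom ≫ F.map m.right⟩ : Comma (𝟭 𝒞) F) ⟶ b) = τ := by
    apply hτu
    refine ⟨?_, ?_⟩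
    · show θ.right ≫ 𝟙 b.right = 𝟙 b.right
      rw [hθv, Category.comp_id]
    · apply CommaMorphism.ext
      · show m.left ≫ θ.left ≫ m.left = m.left
        rw [← Category.assoc, h1, Category.id_comp]
      · show m.right ≫ θ.right ≫ 𝟙 b.right = m.right
        rw [hθv]; simp
  have h2 : θ.left ≫ m.left = 𝟙 b.left :=
    (congrArg CommaMorphism.left (e1.trans e2.symm)).symm
  exact ⟨θ.left, h1, h2⟩

private lemma glue_cart_pb (F : ℬ ⥤ 𝒞) {d b : Comma (𝟭 𝒞) F} (ψ : d ⟶ b)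
    (hψ : IsCartesianHom (Comma.snd (𝟭 𝒞) F) ψ) :
    IsPullback ψ.left d.hom b.hom (F.map ψ.right) := by
  have comm : ψ.left ≫ b.hom = d.hom ≫ F.map ψ.right := by simpa using ψ.w
  have key : ∀ s : PullbackCone b.hom (F.map ψ.right),
      ∃! r : s.pt ⟶ d.left, r ≫ ψ.left = s.fst ∧ r ≫ d.hom = s.snd := by
    intro s
    obtain ⟨χ, ⟨hχv, hχc⟩, hχu⟩ :=
      hψ ⟨s.pt, d.right, s.snd⟩
        ⟨s.fst, ψ.right, show s.fst ≫ b.hom = s.snd ≫ F.map ψ.right from s.condition⟩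
        (𝟙 d.right) (show ψ.right = 𝟙 d.right ≫ ψ.right from (Category.id_comp _).symm)
    simp only [Comma.snd_map] at hχv
    refine ⟨χ.left, ⟨congrArg CommaMorphism.left hχc, ?_⟩, ?_⟩
    · have := χ.w
      simp only [Functor.id_map, hχv, F.map_id, Category.comp_id] at this
      exact this
    · intro r ⟨hr1, hr2⟩
      have hw : (𝟭 𝒞).map r ≫ d.hom = s.snd ≫ F.map (𝟙 d.right) := by simpa using hr2
      have : (⟨r, 𝟙 d.right, hw⟩ :
          (⟨s.pt, d.right, s.snd⟩ : Comma (𝟭 𝒞) F) ⟶ d) = χ := by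
        apply hχu
        refine ⟨rfl, ?_⟩
        apply CommaMorphism.ext
        · show r ≫ ψ.left = s.fst
          exact hr1
        · show 𝟙 d.right ≫ ψ.right = ψ.right
          simp
      exact congrArg CommaMorphism.left this
  exact IsPullback.of_isLimit (PullbackCone.IsLimit.mk comm
    (fun s => (key s).choose)
    (fun s => (key s).choose_spec.1.1)
    (fun s => (key s).choose_spec.1.2)
    (fun s r h1 h2 => (key s).choose_spec.2 r ⟨h1, h2⟩))

end Aux

/-- For a pullback-preserving functor `F` between categories with pullbacks,
in the glueing fibration `gl F = ∂₁ : 𝒞↓F ⥤ 𝒮` a morphism is cocartesian iff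
its `𝒞`-component is an isomorphism, and `gl F` has internal sums satisfying
the Beck–Chevalley condition. -/
theorem glueing_cocartesian_iff_iso_and_internal_sums
    {ℬ : Type u₂} [Category.{v₂} ℬ] [HasPullbacks ℬ] [HasPullbacks 𝒞]
    (F : ℬ ⥤ 𝒞)
    (hF : ∀ {w x y z : ℬ} (fst : w ⟶ x) (snd : w ⟶ y) (f : x ⟶ z) (g : y ⟶ z),
      IsPullback fst snd f g →
      IsPullback (F.map fst) (F.map snd) (F.map f) (F.map g)) :
    (∀ (a b : Comma (𝟭 𝒞) F) (m : a ⟶ b),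
        IsCocartesianHom (Comma.snd (𝟭 𝒞) F) m ↔ IsIso m.left) ∧
    HasInternalSums (Comma.snd (𝟭 𝒞) F) := by
  have isoIff : ∀ (a b : Comma (𝟭 𝒞) F) (m : a ⟶ b),
      IsCocartesianHom (Comma.snd (𝟭 𝒞) F) m ↔ IsIso m.left := fun a b m =>
    ⟨glue_cocart_iso F m, glue_iso_cocart F m⟩
  refine ⟨isoIff, ?_, ?_⟩
  · -- cocartesian lifts exist
    intro x J u
    change x.right ⟶ J at u
    refine ⟨⟨x.left, J, x.hom ≫ F.map u⟩, ⟨𝟙 x.left, u, by simp⟩, rfl, ?_, by simp⟩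
    exact (isoIff _ _ _).mpr (by dsimp; infer_instance)
  · -- Beck–Chevalley
    intro c d a b φ' ψ' ψ φ hsq hψ hψ' hφ hpb
    refine (isoIff _ _ _).mpr ?_
    have hφl : IsIso φ.left := (isoIff _ _ _).mp hφ
    have S1 := glue_cart_pb F ψ hψ
    have A := glue_cart_pb F ψ' hψ'
    have Bpb : IsPullback (F.map φ'.right) (F.map ψ'.right) (F.map ψ.right) (F.map φ.right) :=
      hF _ _ _ _ hpb
    have P2 := A.paste_vert Bpb.flip
    have φw : φ.left ≫ b.hom = a.hom ≫ F.map φ.right := by simpa using φ.w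
    have isoSq : IsPullback φ.left (a.hom ≫ F.map φ.right) b.hom (𝟙 (F.obj b.right)) :=
      IsPullback.of_horiz_isIso ⟨by simpa using φw⟩
    have Q := P2.paste_horiz isoSq
    rw [Category.comp_id] at Q
    have hcl : φ'.left ≫ ψ.left = ψ'.left ≫ φ.left := by
      simpa using congrArg CommaMorphism.left hsq
    have hch : φ'.left ≫ d.hom = c.hom ≫ F.map φ'.right := by simpa using φ'.w
    refine ⟨Q.lift ψ.left d.hom S1.w, ?_, ?_⟩
    · apply Q.hom_ext
      · rw [Category.assoc, Q.lift_fst ψ.left d.hom S1.w, hcl, Category.id_comp]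
      · rw [Category.assoc, Q.lift_snd ψ.left d.hom S1.w, hch, Category.id_comp]
    · apply S1.hom_ext
      · rw [Category.assoc, hcl, Q.lift_fst ψ.left d.hom S1.w, Category.id_comp]
      · rw [Category.assoc, hch, Q.lift_snd ψ.left d.hom S1.w, Category.id_comp]


end FibNotes
end

section
/- Let F : B ⟶ C be a functor between categories with finite limits that has a right adjoint U. Then the fibration gl(F) = ∂₁ : C↓F ⟶ B has small global sections: the terminal-object functor 1 : B ⟶ C↓F (sending I to id_{FI}) has a right adjoint G, where the counit of 1 ⊣ G at a : A ⟶ FI is obtained by pulling back Ua : UA ⟶ UFI along the unit η_I : I ⟶ UFI and transposing. -/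
open CategoryTheory CategoryTheory.Limits

namespace FibNotes

universe v₁ u₁ v₂ u₂

variable {𝒳 : Type u₁} [Category.{v₁} 𝒳] {𝒮 : Type u₂} [Category.{v₂} 𝒮]

variable {𝒞 : Type u₁} [Category.{v₁} 𝒞] {ℬ : Type u₂} [Category.{v₂} ℬ]

/-- The fibrewise-terminal-object functor `1 : ℬ ⥤ 𝒞↓F`, sending `I` to
`id__{F I}`. -/
def oneFunctor (F : ℬ ⥤ 𝒞) : ℬ ⥤ Comma (𝟭 𝒞) F where
  obj I := { left := F.obj I, right := I, hom := 𝟙 (F.obj I) }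
  map {I J} u := { left := F.map u, right := u, w := by simp }

/-- If `F : ℬ ⥤ 𝒞` between finitely complete categories has a right adjoint
`U`, then the glueing fibration `gl F` has small global sections: the functor
`1 : ℬ ⥤ 𝒞↓F` has a right adjoint `G`, whose counit at `a : A ⟶ F I` is
obtained by pulling back `U a : U A ⟶ U F I` along the unit `η_I : I ⟶ U F I`
and transposing. -/
theorem glueing_small_global_sections
    [HasFiniteLimits ℬ] [HasFiniteLimits 𝒞]
    (F : ℬ ⥤ 𝒞) (U : 𝒞 ⥤ ℬ) (adjFU : F ⊣ U) :
    ∃ (G : Comma (𝟭 𝒞) F ⥤ ℬ) (adj : oneFunctor F ⊣ G),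
      ∀ x : Comma (𝟭 𝒞) F, ∃ q : G.obj x ⟶ U.obj x.left,
        IsPullback q ((adj.counit.app x).right) (U.map x.hom)
          (adjFU.unit.app x.right) ∧
        (adj.counit.app x).left = F.map q ≫ adjFU.counit.app x.left := by
  classical
  set Gobj : Comma (𝟭 𝒞) F → ℬ :=
    fun x => pullback (U.map x.hom) (adjFU.unit.app x.right) with hGobj
  have wlem : ∀ (x : Comma (𝟭 𝒞) F) (I : ℬ) (g : I ⟶ Gobj x),
      (𝟭 𝒞).map (F.map (g ≫ pullback.fst _ _) ≫ adjFU.counit.app x.left) ≫ x.hom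
        = ((oneFunctor F).obj I).hom ≫ F.map (g ≫ pullback.snd _ _) := by
    intro x I g
    have h2 : (g ≫ pullback.fst _ _ : I ⟶ _) ≫ U.map x.hom
        = (g ≫ pullback.snd _ _) ≫ adjFU.unit.app x.right := by
      simp [pullback.condition]
    have h1 : adjFU.counit.app x.left ≫ x.hom
        = F.map (U.map x.hom) ≫ adjFU.counit.app (F.obj x.right) := by
      simp [(adjFU.counit_naturality x.hom).symm]
    simp only [Functor.id_map, oneFunctor, Category.id_comp, Category.assoc]
    rw [h1, ← Functor.map_comp_assoc, h2]
    simp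
  set e : ∀ (I : ℬ) (x : Comma (𝟭 𝒞) F),
      ((oneFunctor F).obj I ⟶ x) ≃ (I ⟶ Gobj x) := fun I x =>
    { toFun := fun f => pullback.lift (adjFU.unit.app I ≫ U.map f.left) f.right (by
        have hw := f.w
        simp only [oneFunctor, Functor.id_map, Category.id_comp] at hw
        have h3 := congrArg U.map hw
        rw [U.map_comp] at h3
        rw [Category.assoc, h3]
        simp)
      invFun := fun g =>
        { left := F.map (g ≫ pullback.fst _ _) ≫ adjFU.counit.app x.left
          right := g ≫ pullback.snd _ _
          w := wlem x I g }
      left_inv := by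
        intro f
        apply CommaMorphism.ext
        · dsimp only
          erw [pullback.lift_fst]
          have key2 : ∀ {X : ℬ} {Y : 𝒞} (k : F.obj X ⟶ Y),
              F.map (adjFU.unit.app X ≫ U.map k) ≫ adjFU.counit.app Y = k := by
            intro X Y k
            simp
          exact key2 f.left
        · dsimp only
          erw [pullback.lift_snd]
      right_inv := by
        intro g
        apply pullback.hom_ext
        · dsimp only
          erw [pullback.lift_fst]
          have key : ∀ {J : ℬ} {Y : 𝒞} (h : J ⟶ U.obj Y),
              adjFU.unit.app J ≫ U.map (F.map h ≫ adjFU.counit.app Y) = h := by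
            intro J Y h
            simp
          exact key _
        · dsimp only
          erw [pullback.lift_snd]
          rfl } with he'
  have he : ∀ (I' I : ℬ) (x : Comma (𝟭 𝒞) F) (f : I' ⟶ I)
      (g : (oneFunctor F).obj I ⟶ x),
      e I' x ((oneFunctor F).map f ≫ g) = f ≫ e I x g := by
    intro I' I x f g
    apply pullback.hom_ext
    · simp only [he', Equiv.coe_fn_mk]
      refine (pullback.lift_fst _ _ _).trans ?_
      refine Eq.trans ?_ (Category.assoc _ _ _).symm
      refine Eq.trans ?_ (congrArg (f ≫ ·) (pullback.lift_fst _ _ _).symm)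
      have key3 : ∀ {J' J : ℬ} {Y : 𝒞} (u : J' ⟶ J) (k : F.obj J ⟶ Y),
          adjFU.unit.app J' ≫ U.map (F.map u ≫ k) = u ≫ adjFU.unit.app J ≫ U.map k := by
        intro J' J Y u k
        simp [adjFU.unit_naturality_assoc]
      exact key3 f g.left
    · simp only [he', Equiv.coe_fn_mk]
      refine (pullback.lift_snd _ _ _).trans ?_
      refine Eq.trans ?_ (Category.assoc _ _ _).symm
      refine Eq.trans ?_ (congrArg (f ≫ ·) (pullback.lift_snd _ _ _).symm)
      rfl
  refine ⟨Adjunction.rightAdjointOfEquiv e he, Adjunction.adjunctionOfEquivRight e he,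
    fun x => ⟨pullback.fst _ _, ?_, ?_⟩⟩
  · have : ((Adjunction.adjunctionOfEquivRight e he).counit.app x).right
        = pullback.snd (U.map x.hom) (adjFU.unit.app x.right) := by
      simp only [Adjunction.adjunctionOfEquivRight, Adjunction.mkOfHomEquiv,
        he', Equiv.coe_fn_symm_mk, Adjunction.mk'_counit]
      exact Category.id_comp _
    rw [this]
    exact IsPullback.of_hasPullback (U.map x.hom) (adjFU.unit.app x.right)
  · simp only [Adjunction.adjunctionOfEquivRight, Adjunction.mkOfHomEquiv,
      he', Equiv.coe_fn_symm_mk, Adjunction.mk'_counit]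
    exact congrArg (fun k => F.map k ≫ adjFU.counit.app x.left) (Category.id_comp _)

end FibNotes
end

section
/- Let F, U be a geometric morphism with F : B ⟶ C preserving finite limits and F ⊣-right adjoint U, between categories with finite limits. If F is full and faithful, then the fibred direct-image functor Γ : C↓F ⟶ B^2 over B (acting fibrewise by a ↦ η_I⁻¹ ∘ U(a) for a : A ⟶ FI) has a right adjoint ∇ given fibrewise on v : K ⟶ J by pulling back R(v) along the transpose ζ_J : FJ ⟶ RJ of η_J⁻¹, provided U has a right adjoint R; i.e. the geometric morphism is local iff Γ has a fibred right adjoint. -/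
open CategoryTheory CategoryTheory.Limits

namespace FibNotes

universe v₁ u₁ v₂ u₂

variable {𝒳 : Type u₁} [Category.{v₁} 𝒳] {𝒮 : Type u₂} [Category.{v₂} 𝒮]

variable {𝒞 : Type u₁} [Category.{v₁} 𝒞] {ℬ : Type u₂} [Category.{v₂} ℬ]

/-- The fibred direct-image functor `Γ : 𝒞↓F ⥤ ℬ^𝟚` over `ℬ`, defined (when
the unit of `F ⊣ U` is invertible, i.e. `F` is full and faithful) fibrewise by
`a ↦ η_I⁻¹ ∘ U a`. Here `e : 𝟭 ℬ ≅ F ⋙ U` inverts the unit. -/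
def GammaFunctor (F : ℬ ⥤ 𝒞) (U : 𝒞 ⥤ ℬ) (e : 𝟭 ℬ ≅ F ⋙ U) :
    Comma (𝟭 𝒞) F ⥤ Arrow ℬ where
  obj x := Arrow.mk (U.map x.hom ≫ e.inv.app x.right)
  map {x y} m := Arrow.homMk (u := U.map m.left) (v := m.right) (by
    have h1 : m.left ≫ y.hom = x.hom ≫ F.map m.right := by
      simpa using m.w
    have h2 : (F ⋙ U).map m.right ≫ e.inv.app y.right =
        e.inv.app x.right ≫ m.right := by
      simpa using e.inv.naturality m.right
    dsimp
    rw [← Category.assoc, ← U.map_comp, h1, U.map_comp, Category.assoc]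
    rw [show (U.map (F.map m.right)) = (F ⋙ U).map m.right from rfl, h2]
    simp)
  map_id x := by
    apply CommaMorphism.ext <;> simp
  map_comp f g := by
    apply CommaMorphism.ext <;> simp

/-- The transpose `ζ_J : F J ⟶ R J` of `η_J⁻¹` w.r.t. `U ⊣ R`. -/
def zetaMap (F : ℬ ⥤ 𝒞) (U : 𝒞 ⥤ ℬ) (R : ℬ ⥤ 𝒞) (adjUR : U ⊣ R)
    (e : 𝟭 ℬ ≅ F ⋙ U) (J : ℬ) : F.obj J ⟶ R.obj J :=
  (adjUR.homEquiv (F.obj J) J) (e.inv.app J)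

section NablaAux

variable (F : ℬ ⥤ 𝒞) (U : 𝒞 ⥤ ℬ) (R : ℬ ⥤ 𝒞) (adjUR : U ⊣ R) (e : 𝟭 ℬ ≅ F ⋙ U)

lemma zeta_natural {J J' : ℬ} (w : J ⟶ J') :
    F.map w ≫ zetaMap F U R adjUR e J' = zetaMap F U R adjUR e J ≫ R.map w := by
  dsimp [zetaMap]
  rw [← adjUR.homEquiv_naturality_right, ← adjUR.homEquiv_naturality_left]
  congr 1
  simpa using e.inv.naturality w

lemma zeta_key (x : Comma (𝟭 𝒞) F) {J : ℬ} (g : x.right ⟶ J) :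
    (x.hom ≫ F.map g) ≫ zetaMap F U R adjUR e J =
      adjUR.homEquiv x.left J ((U.map x.hom ≫ e.inv.app x.right) ≫ g) := by
  rw [Category.assoc, zeta_natural, ← Category.assoc]
  rw [adjUR.homEquiv_naturality_right]
  congr 1
  dsimp [zetaMap]
  rw [← adjUR.homEquiv_naturality_left]

variable [HasFiniteLimits 𝒞]

/-- Object part of `∇`. -/
noncomputable def NablaObj (v : Arrow ℬ) : Comma (𝟭 𝒞) F where
  left := pullback (R.map v.hom) (zetaMap F U R adjUR e v.right)
  right := v.right
  hom := pullback.snd _ _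

lemma nabla_map_cond {v v' : Arrow ℬ} (m : v ⟶ v') :
    (pullback.fst (R.map v.hom) (zetaMap F U R adjUR e v.right) ≫ R.map m.left) ≫
        R.map v'.hom =
      (pullback.snd (R.map v.hom) (zetaMap F U R adjUR e v.right) ≫ F.map m.right) ≫
        zetaMap F U R adjUR e v'.right := by
  have hw : m.left ≫ v'.hom = v.hom ≫ m.right := by simpa using m.w
  rw [Category.assoc, ← R.map_comp, hw, R.map_comp, ← Category.assoc,
    pullback.condition, Category.assoc, Category.assoc, ← zeta_natural]

/-- The fibred functor `∇ : ℬ^𝟚 ⥤ 𝒞↓F`. -/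
noncomputable def Nabla : Arrow ℬ ⥤ Comma (𝟭 𝒞) F where
  obj := NablaObj F U R adjUR e
  map {v v'} m :=
    { left := pullback.lift
        (pullback.fst _ _ ≫ R.map m.left)
        (pullback.snd _ _ ≫ F.map m.right)
        (nabla_map_cond F U R adjUR e m)
      right := m.right
      w := by simp [NablaObj, pullback.lift_fst, pullback.lift_snd, pullback.lift_fst_assoc, pullback.lift_snd_assoc] }
  map_id v := by
    apply CommaMorphism.ext
    · apply pullback.hom_ext <;> simp [NablaObj, pullback.lift_fst, pullback.lift_snd, pullback.lift_fst_assoc, pullback.lift_snd_assoc]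
    · simp [NablaObj, pullback.lift_fst, pullback.lift_snd, pullback.lift_fst_assoc, pullback.lift_snd_assoc]
  map_comp f g := by
    apply CommaMorphism.ext
    · apply pullback.hom_ext <;> simp [NablaObj, pullback.lift_fst, pullback.lift_snd, pullback.lift_fst_assoc, pullback.lift_snd_assoc]
    · simp [NablaObj, pullback.lift_fst, pullback.lift_snd, pullback.lift_fst_assoc, pullback.lift_snd_assoc]

lemma forward_cond (x : Comma (𝟭 𝒞) F) (v : Arrow ℬ)
    (f : (GammaFunctor F U e).obj x ⟶ v) :
    (adjUR.homEquiv x.left v.left f.left) ≫ R.map v.hom =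
      (x.hom ≫ F.map f.right) ≫ zetaMap F U R adjUR e v.right := by
  have hw : f.left ≫ v.hom = (U.map x.hom ≫ e.inv.app x.right) ≫ f.right := by
    simpa [GammaFunctor] using f.w
  exact ((adjUR.homEquiv_naturality_right f.left v.hom).symm.trans
    (congrArg (adjUR.homEquiv x.left v.right) hw)).trans (zeta_key F U R adjUR e x f.right).symm

/-- The fibrewise adjunction `Γ ⊣ ∇`. -/
noncomputable def gammaNablaAdj : GammaFunctor F U e ⊣ Nabla F U R adjUR e :=
  Adjunction.mkOfHomEquiv
    { homEquiv := fun x v =>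
        { toFun := fun f =>
            { left := pullback.lift (adjUR.homEquiv _ _ f.left)
                (x.hom ≫ F.map f.right) (forward_cond F U R adjUR e x v f)
              right := f.right
              w := by simp [Nabla, NablaObj, pullback.lift_fst, pullback.lift_snd, pullback.lift_fst_assoc, pullback.lift_snd_assoc] }
          invFun := fun h =>
            { left := (adjUR.homEquiv _ _).symm (h.left ≫ pullback.fst _ _)
              right := h.right
              w := by
                have hw : h.left ≫ pullback.snd _ _ = x.hom ≫ F.map h.right := by
                  simpa [Nabla, NablaObj] using h.w
                dsimp [GammaFunctor]
                apply (adjUR.homEquiv _ _).injective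
                rw [adjUR.homEquiv_naturality_right, Equiv.apply_symm_apply]
                exact (Category.assoc _ _ _).trans ((congrArg (fun k => h.left ≫ k) pullback.condition).trans
                  ((Category.assoc _ _ _).symm.trans ((congrArg (fun k => k ≫ zetaMap F U R adjUR e v.right) hw).trans
                  ((zeta_key F U R adjUR e x h.right).trans (by simp; rfl))))) }
          left_inv := fun f => by
            apply CommaMorphism.ext
            · dsimp
              erw [pullback.lift_fst, Equiv.symm_apply_apply]
            · rfl
          right_inv := fun h => by
            have hw : h.left ≫ pullback.snd _ _ = x.hom ≫ F.map h.right := by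
              simpa [Nabla, NablaObj] using h.w
            apply CommaMorphism.ext
            · dsimp
              apply pullback.hom_ext
              · rw [pullback.lift_fst, Equiv.apply_symm_apply]
                rfl
              · rw [pullback.lift_snd]
                exact hw.symm
            · rfl }
      homEquiv_naturality_left_symm := fun {x' x v} m g => by
        apply CommaMorphism.ext
        · dsimp [GammaFunctor]
          exact (congrArg (adjUR.homEquiv _ _).symm (Category.assoc m.left g.left _)).trans
            (adjUR.homEquiv_naturality_left_symm _ _)
        · rfl
      homEquiv_naturality_right := fun {x v v'} f g => by
        apply CommaMorphism.ext
        · dsimp [Nabla, NablaObj]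
          apply pullback.hom_ext
          · erw [pullback.lift_fst, Category.assoc, pullback.lift_fst, pullback.lift_fst_assoc]
            exact adjUR.homEquiv_naturality_right _ _
          · erw [pullback.lift_snd, Category.assoc, pullback.lift_snd, pullback.lift_snd_assoc]
            exact (congrArg (x.hom ≫ ·) (F.map_comp f.right g.right)).trans (Category.assoc _ _ _).symm
        · rfl }

end NablaAux

/-- For a geometric morphism `F ⊣ U` between finitely complete categories with
`F` full and faithful and `U` having a right adjoint `R` (i.e. a *local*
geometric morphism), the fibred direct-image functor `Γ` (acting fibrewise by
`a ↦ η_I⁻¹ ∘ U a`) has a right adjoint `∇` over `ℬ`, given fibrewise on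
`v : K ⟶ J` by pulling back `R v` along the transpose `ζ_J : F J ⟶ R J`
of `η_J⁻¹`. -/
theorem local_geometric_morphism_nabla
    [HasFiniteLimits ℬ] [HasFiniteLimits 𝒞]
    (F : ℬ ⥤ 𝒞) (U : 𝒞 ⥤ ℬ) (adjFU : F ⊣ U)
    (hFull : F.Full) (hFaithful : F.Faithful)
    (R : ℬ ⥤ 𝒞) (adjUR : U ⊣ R) :
    ∀ (e : 𝟭 ℬ ≅ F ⋙ U), e.hom = adjFU.unit →
    ∃ (Nabla : Arrow ℬ ⥤ Comma (𝟭 𝒞) F)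
      (_ : GammaFunctor F U e ⊣ Nabla),
      ∀ v : Arrow ℬ, ∃ (hv : (Nabla.obj v).right = v.right)
        (q : (Nabla.obj v).left ⟶ R.obj v.left),
        ((Nabla.obj v).hom ≫ F.map (eqToHom hv)) ≫
            zetaMap F U R adjUR e v.right =
          q ≫ R.map v.hom ∧
        IsPullback q ((Nabla.obj v).hom ≫ F.map (eqToHom hv))
          (R.map v.hom) (zetaMap F U R adjUR e v.right) := by
  intro e he
  refine ⟨Nabla F U R adjUR e, gammaNablaAdj F U R adjUR e, fun v => ?_⟩
  refine ⟨rfl, pullback.fst _ _, ?_, ?_⟩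
  · erw [eqToHom_refl, F.map_id, Category.comp_id]
    simp [Nabla, NablaObj, pullback.condition, pullback.lift_fst, pullback.lift_snd, pullback.lift_fst_assoc, pullback.lift_snd_assoc]
  · have h : ((Nabla F U R adjUR e).obj v).hom ≫ F.map (eqToHom rfl) =
        pullback.snd (R.map v.hom) (zetaMap F U R adjUR e v.right) := by
      erw [eqToHom_refl, F.map_id, Category.comp_id]
      rfl
    erw [h]
    exact IsPullback.of_hasPullback _ _

end FibNotes
end
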